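/- arXiv:math/0512539 — 2 statements merged into one kernel-verified Lean document; each statement's English description precedes it below -/
import Mathlib

section
/- Given constants δ, C, D > 0 and P ≥ 1, there exists K > 0 (depending only on δ, C, D, P) such that the following holds: let (X,d) be a δ-hyperbolic geodesic metric space and 𝓗 a collection of C-quasiconvex, D-separated subsets of X; if β is an electric P-quasigeodesic without backtracking from x to y and γ is a d-geodesic from x to y, then β is contained in the K-neighborhood of γ with respect to the electric pseudometric d_e. -/
open Set
open scoped Classical ENNReal

/-- `γ` is a geodesic segment from `x` to `y`, parametrized by arclength on `[0, dist x y]`. -/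
def IsGeodesicSeg {X : Type} [MetricSpace X] (γ : ℝ → X) (x y : X) : Prop :=
  γ 0 = x ∧ γ (dist x y) = y ∧
    ∀ s ∈ Set.Icc (0 : ℝ) (dist x y), ∀ t ∈ Set.Icc (0 : ℝ) (dist x y),
      dist (γ s) (γ t) = |s - t|

/-- The image (underlying set) of a geodesic segment from `x` to `y`. -/
def geodImage {X : Type} [MetricSpace X] (γ : ℝ → X) (x y : X) : Set X :=
  γ '' Set.Icc (0 : ℝ) (dist x y)

/-- A geodesic metric space: any two points are joined by a geodesic segment. -/
def GeodesicMS (X : Type) [MetricSpace X] : Prop :=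
  ∀ x y : X, ∃ γ : ℝ → X, IsGeodesicSeg γ x y

/-- `X` is δ-hyperbolic: all geodesic triangles are δ-thin, i.e. each side lies in the
δ-neighborhood of the union of the other two sides. -/
def DeltaHyperbolic (X : Type) [MetricSpace X] (δ : ℝ) : Prop :=
  ∀ (x y z : X) (γ₁ γ₂ γ₃ : ℝ → X),
    IsGeodesicSeg γ₁ x y → IsGeodesicSeg γ₂ y z → IsGeodesicSeg γ₃ x z →
    ∀ p ∈ geodImage γ₃ x z, ∃ q ∈ geodImage γ₁ x y ∪ geodImage γ₂ y z, dist p q ≤ δ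

/-- A subset `Z` is C-quasiconvex: every geodesic segment joining two points of `Z` lies
in the C-neighborhood of `Z`. -/
def QuasiconvexSubset {X : Type} [MetricSpace X] (C : ℝ) (Z : Set X) : Prop :=
  ∀ x ∈ Z, ∀ y ∈ Z, ∀ γ : ℝ → X, IsGeodesicSeg γ x y →
    ∀ p ∈ geodImage γ x y, ∃ z ∈ Z, dist p z ≤ C

/-- A collection of subsets is D-separated: distinct members are at distance at least `D`. -/
def SeparatedColl {X : Type} [MetricSpace X] (D : ℝ) (𝓗 : Set (Set X)) : Prop :=
  ∀ H₁ ∈ 𝓗, ∀ H₂ ∈ 𝓗, H₁ ≠ H₂ → ∀ a ∈ H₁, ∀ b ∈ H₂, D ≤ dist a b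

/-- The cost of a single step of an electric chain: a step both of whose endpoints lie in a
common electrocuted set costs at most `1`; any other step costs the distance between its
endpoints. -/
noncomputable def elecStep {X : Type} [MetricSpace X] (𝓗 : Set (Set X)) (a b : X) : ℝ :=
  if ∃ H ∈ 𝓗, a ∈ H ∧ b ∈ H then min 1 (dist a b) else dist a b

/-- The electric (coned-off) pseudometric obtained by electrocuting the members of `𝓗`:
the infimum of total costs of finite chains from `x` to `y`. -/
noncomputable def elecDist {X : Type} [MetricSpace X] (𝓗 : Set (Set X)) (x y : X) : ℝ :=
  sInf { r : ℝ | ∃ (n : ℕ) (c : ℕ → X), c 0 = x ∧ c n = y ∧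
    r = ∑ i ∈ Finset.range n, elecStep 𝓗 (c i) (c (i + 1)) }

/-- `β`, parametrized on `[0,T]`, is a P-quasigeodesic for the electric pseudometric. -/
def ElecQuasigeodesic {X : Type} [MetricSpace X] (𝓗 : Set (Set X)) (P : ℝ)
    (β : ℝ → X) (T : ℝ) : Prop :=
  ∀ s ∈ Set.Icc (0 : ℝ) T, ∀ t ∈ Set.Icc (0 : ℝ) T,
    (1 / P) * |s - t| - P ≤ elecDist 𝓗 (β s) (β t) ∧
      elecDist 𝓗 (β s) (β t) ≤ P * |s - t| + P

/-- `β` does not backtrack: it never returns to a member of `𝓗` after leaving it. -/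
def NoBacktracking {X : Type} [MetricSpace X] (𝓗 : Set (Set X)) (β : ℝ → X) (T : ℝ) : Prop :=
  ∀ H ∈ 𝓗, ∀ s t u : ℝ, 0 ≤ s → s ≤ t → t ≤ u → u ≤ T → β s ∈ H → β u ∈ H → β t ∈ H


namespace ElecTrack

variable {X : Type} [MetricSpace X]

lemma elecStep_nonneg (𝓗 : Set (Set X)) (a b : X) : 0 ≤ elecStep 𝓗 a b := by
  unfold elecStep
  split
  · exact le_min zero_le_one dist_nonneg
  · exact dist_nonneg

lemma elecStep_le_dist (𝓗 : Set (Set X)) (a b : X) : elecStep 𝓗 a b ≤ dist a b := by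
  unfold elecStep
  split
  · exact min_le_right _ _
  · exact le_refl _

lemma elecStep_comm (𝓗 : Set (Set X)) (a b : X) : elecStep 𝓗 a b = elecStep 𝓗 b a := by
  unfold elecStep
  rw [dist_comm]
  congr 1
  simp only [eq_iff_iff]
  constructor
  · rintro ⟨H, hH, ha, hb⟩; exact ⟨H, hH, hb, ha⟩
  · rintro ⟨H, hH, ha, hb⟩; exact ⟨H, hH, hb, ha⟩

/-- The set of chain costs from x to y. -/
def chainCosts (𝓗 : Set (Set X)) (x y : X) : Set ℝ :=
  { r : ℝ | ∃ (n : ℕ) (c : ℕ → X), c 0 = x ∧ c n = y ∧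
    r = ∑ i ∈ Finset.range n, elecStep 𝓗 (c i) (c (i + 1)) }

lemma elecDist_eq (𝓗 : Set (Set X)) (x y : X) : elecDist 𝓗 x y = sInf (chainCosts 𝓗 x y) := rfl

lemma chainCosts_nonempty (𝓗 : Set (Set X)) (x y : X) : (chainCosts 𝓗 x y).Nonempty := by
  refine ⟨elecStep 𝓗 x y, 1, fun i => if i = 0 then x else y, by simp, by simp, ?_⟩
  simp

lemma chainCosts_nonneg (𝓗 : Set (Set X)) (x y : X) : ∀ r ∈ chainCosts 𝓗 x y, (0:ℝ) ≤ r := by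
  rintro r ⟨n, c, h0, hn, rfl⟩
  exact Finset.sum_nonneg fun i _ => elecStep_nonneg 𝓗 _ _

lemma chainCosts_bddBelow (𝓗 : Set (Set X)) (x y : X) : BddBelow (chainCosts 𝓗 x y) :=
  ⟨0, fun r hr => chainCosts_nonneg 𝓗 x y r hr⟩

lemma elecDist_nonneg (𝓗 : Set (Set X)) (x y : X) : 0 ≤ elecDist 𝓗 x y :=
  le_csInf (chainCosts_nonempty 𝓗 x y) (chainCosts_nonneg 𝓗 x y)

lemma elecDist_le_chain (𝓗 : Set (Set X)) {x y : X} {r : ℝ} (h : r ∈ chainCosts 𝓗 x y) :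
    elecDist 𝓗 x y ≤ r :=
  csInf_le (chainCosts_bddBelow 𝓗 x y) h

lemma elecDist_le_elecStep (𝓗 : Set (Set X)) (x y : X) : elecDist 𝓗 x y ≤ elecStep 𝓗 x y := by
  refine elecDist_le_chain 𝓗 ⟨1, fun i => if i = 0 then x else y, by simp, by simp, by simp⟩

lemma elecDist_le_dist (𝓗 : Set (Set X)) (x y : X) : elecDist 𝓗 x y ≤ dist x y :=
  le_trans (elecDist_le_elecStep 𝓗 x y) (elecStep_le_dist 𝓗 x y)

lemma elecDist_self (𝓗 : Set (Set X)) (x : X) : elecDist 𝓗 x x = 0 :=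
  le_antisymm (by simpa using elecDist_le_dist 𝓗 x x) (elecDist_nonneg 𝓗 x x)

lemma exists_chain_lt (𝓗 : Set (Set X)) {x y : X} {e : ℝ} (h : elecDist 𝓗 x y < e) :
    ∃ r ∈ chainCosts 𝓗 x y, r < e :=
  exists_lt_of_csInf_lt (chainCosts_nonempty 𝓗 x y) h

lemma chainCosts_comm (𝓗 : Set (Set X)) {x y : X} {r : ℝ} (h : r ∈ chainCosts 𝓗 x y) :
    r ∈ chainCosts 𝓗 y x := by
  obtain ⟨n, c, h0, hn, rfl⟩ := h
  refine ⟨n, fun i => c (n - i), by simp [hn], by simp [h0], ?_⟩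
  rw [show (∑ i ∈ Finset.range n, elecStep 𝓗 (c i) (c (i+1)))
      = ∑ i ∈ Finset.range n, elecStep 𝓗 (c (n - (n-1-i))) (c (n - (n-1-i+1))) from
    Finset.sum_congr rfl (fun i hi => by
      simp only [Finset.mem_range] at hi
      have h1 : n - (n-1-i) = i + 1 := by omega
      have h2 : n - (n-1-i+1) = i := by omega
      rw [h1, h2, elecStep_comm])]
  exact Finset.sum_range_reflect (fun j => elecStep 𝓗 (c (n - j)) (c (n - (j+1)))) n

lemma elecDist_comm (𝓗 : Set (Set X)) (x y : X) : elecDist 𝓗 x y = elecDist 𝓗 y x := by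
  apply le_antisymm <;>
  · apply le_csInf (chainCosts_nonempty 𝓗 _ _)
    intro r hr
    exact elecDist_le_chain 𝓗 (chainCosts_comm 𝓗 hr)

lemma chainCosts_add (𝓗 : Set (Set X)) {x y z : X} {r₁ r₂ : ℝ}
    (h₁ : r₁ ∈ chainCosts 𝓗 x y) (h₂ : r₂ ∈ chainCosts 𝓗 y z) :
    r₁ + r₂ ∈ chainCosts 𝓗 x z := by
  obtain ⟨n₁, c₁, h10, h1n, rfl⟩ := h₁
  obtain ⟨n₂, c₂, h20, h2n, rfl⟩ := h₂
  refine ⟨n₁ + n₂, fun i => if i < n₁ then c₁ i else c₂ (i - n₁), ?_, ?_, ?_⟩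
  · by_cases h : 0 < n₁
    · simp [h, h10]
    · have h0' : n₁ = 0 := by omega
      subst h0'
      simpa [h20] using h1n.symm.trans h10
  · have h' : ¬ (n₁ + n₂ < n₁) := by omega
    simp [h', h2n]
  · refine Eq.symm ?_
    rw [Finset.sum_range_add]
    congr 1
    · apply Finset.sum_congr rfl
      intro i hi
      simp only [Finset.mem_range] at hi
      by_cases h : i + 1 < n₁
      · simp [hi, h]
      · have hi1 : i + 1 = n₁ := by omega
        simp [hi, h, hi1, h1n, h20]
    · apply Finset.sum_congr rfl
      intro i hi
      have ha : ¬ (n₁ + i < n₁) := by omega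
      have hb : ¬ (n₁ + i + 1 < n₁) := by omega
      have h2 : n₁ + i + 1 - n₁ = i + 1 := by omega
      simp [ha, hb, h2]

lemma elecDist_triangle (𝓗 : Set (Set X)) (x y z : X) :
    elecDist 𝓗 x z ≤ elecDist 𝓗 x y + elecDist 𝓗 y z := by
  refine le_of_forall_pos_le_add ?_
  intro ε hε
  obtain ⟨r₁, hr₁, hr₁'⟩ := exists_chain_lt 𝓗 (show elecDist 𝓗 x y < elecDist 𝓗 x y + ε/2 by linarith)
  obtain ⟨r₂, hr₂, hr₂'⟩ := exists_chain_lt 𝓗 (show elecDist 𝓗 y z < elecDist 𝓗 y z + ε/2 by linarith)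
  have := elecDist_le_chain 𝓗 (chainCosts_add 𝓗 hr₁ hr₂)
  linarith

end ElecTrack

/-! ### Good chains -/

namespace ElecTrack
set_option linter.unusedSectionVars false
set_option linter.unusedVariables false
set_option linter.unusedTactic false
variable {X : Type} [MetricSpace X]

/-- Both endpoints in a common electrocuted set. -/
def jcond (𝓗 : Set (Set X)) (a b : X) : Prop := ∃ H ∈ 𝓗, a ∈ H ∧ b ∈ H

lemma jcond_symm {𝓗 : Set (Set X)} {a b : X} (h : jcond 𝓗 a b) : jcond 𝓗 b a := by
  obtain ⟨H, hH, ha, hb⟩ := h; exact ⟨H, hH, hb, ha⟩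

/-- A good chain: all steps are short or jumps within a common electrocuted set. -/
def GC (𝓗 : Set (Set X)) (v : ℕ → X) (m : ℕ) : Prop :=
  ∀ i < m, dist (v i) (v (i+1)) ≤ 1 ∨ jcond 𝓗 (v i) (v (i+1))

/-- The weight of a good chain. -/
noncomputable def gcw (v : ℕ → X) (m : ℕ) : ℝ :=
  ∑ i ∈ Finset.range m, min 1 (dist (v i) (v (i+1)))

lemma gcw_nonneg (v : ℕ → X) (m : ℕ) : 0 ≤ gcw v m :=
  Finset.sum_nonneg fun i _ => le_min zero_le_one dist_nonneg

lemma gc_step_elec {𝓗 : Set (Set X)} {v : ℕ → X} {m : ℕ} (h : GC 𝓗 v m) {i : ℕ} (hi : i < m) :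
    elecDist 𝓗 (v i) (v (i+1)) ≤ min 1 (dist (v i) (v (i+1))) := by
  rcases h i hi with hs | hj
  · rw [min_eq_right hs]
    exact elecDist_le_dist 𝓗 _ _
  · refine le_trans (elecDist_le_elecStep 𝓗 _ _) ?_
    unfold elecStep
    rw [if_pos (show ∃ H ∈ 𝓗, v i ∈ H ∧ v (i+1) ∈ H from hj)]

lemma gc_elec_le {𝓗 : Set (Set X)} {v : ℕ → X} {m : ℕ} (h : GC 𝓗 v m) :
    ∀ i j, i ≤ j → j ≤ m →
      elecDist 𝓗 (v i) (v j) ≤ ∑ k ∈ Finset.Ico i j, min 1 (dist (v k) (v (k+1))) := by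
  intro i j hij hjm
  induction j with
  | zero =>
    have : i = 0 := by omega
    simp [this, elecDist_self]
  | succ j ih =>
    by_cases hij' : i = j + 1
    · simp [hij', elecDist_self]
    · have hij2 : i ≤ j := by omega
      have hsum := Finset.sum_Ico_succ_top hij2 (fun k => min 1 (dist (v k) (v (k+1))))
      rw [hsum]
      have h1 := ih hij2 (by omega)
      have h2 := gc_step_elec h (show j < m by omega)
      have h3 := elecDist_triangle 𝓗 (v i) (v j) (v (j+1))
      linarith

lemma gc_elec_ends {𝓗 : Set (Set X)} {v : ℕ → X} {m : ℕ} (h : GC 𝓗 v m) {j : ℕ} (hj : j ≤ m) :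
    elecDist 𝓗 (v 0) (v j) + elecDist 𝓗 (v j) (v m) ≤ gcw v m := by
  have h1 := gc_elec_le h 0 j (by omega) hj
  have h2 := gc_elec_le h j m hj (le_refl m)
  have h3 : gcw v m = ∑ k ∈ Finset.Ico 0 j, min 1 (dist (v k) (v (k+1)))
      + ∑ k ∈ Finset.Ico j m, min 1 (dist (v k) (v (k+1))) := by
    rw [Finset.sum_Ico_consecutive _ (by omega) hj]
    unfold gcw
    rw [Finset.range_eq_Ico]
  linarith

/-- Appending good chains. -/
def chApp (v₁ : ℕ → X) (m₁ : ℕ) (v₂ : ℕ → X) : ℕ → X :=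
  fun i => if i < m₁ then v₁ i else v₂ (i - m₁)

lemma gc_append {𝓗 : Set (Set X)} {v₁ v₂ : ℕ → X} {m₁ m₂ : ℕ}
    (h₁ : GC 𝓗 v₁ m₁) (h₂ : GC 𝓗 v₂ m₂) (hj : v₁ m₁ = v₂ 0) :
    GC 𝓗 (chApp v₁ m₁ v₂) (m₁ + m₂) ∧ chApp v₁ m₁ v₂ 0 = v₁ 0 ∧
      chApp v₁ m₁ v₂ (m₁ + m₂) = v₂ m₂ ∧
      (∀ j ≤ m₁ + m₂, (∃ j' ≤ m₁, chApp v₁ m₁ v₂ j = v₁ j') ∨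
        (∃ j' ≤ m₂, chApp v₁ m₁ v₂ j = v₂ j')) := by
  have key : ∀ i ≤ m₁ + m₂, (i ≤ m₁ ∧ chApp v₁ m₁ v₂ i = v₁ i) ∨
      (m₁ ≤ i ∧ chApp v₁ m₁ v₂ i = v₂ (i - m₁)) := by
    intro i hi
    by_cases h : i < m₁
    · left
      exact ⟨by omega, by simp [chApp, h]⟩
    · right
      exact ⟨by omega, by simp [chApp, h]⟩
  have key2 : ∀ i ≤ m₁, chApp v₁ m₁ v₂ i = v₁ i := by
    intro i hi
    by_cases h : i < m₁
    · simp [chApp, h]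
    · have : i = m₁ := by omega
      simp [chApp, this, hj]
  have key3 : ∀ i, m₁ ≤ i → chApp v₁ m₁ v₂ i = v₂ (i - m₁) := by
    intro i hi
    by_cases h : i < m₁
    · have : i = m₁ := by omega
      simp [chApp, this, hj]
    · simp [chApp, h]
  refine ⟨?_, key2 0 (by omega), key3 _ (by omega) |>.trans (by congr 1; omega), ?_⟩
  · intro i hi
    by_cases h : i < m₁
    · rw [key2 i (by omega), key2 (i+1) (by omega)]
      exact h₁ i h
    · rw [key3 i (by omega), key3 (i+1) (by omega)]
      have he : i + 1 - m₁ = (i - m₁) + 1 := by omega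
      rw [he]
      exact h₂ (i - m₁) (by omega)
  · intro j hjm
    by_cases h : j ≤ m₁
    · exact Or.inl ⟨j, h, key2 j h⟩
    · exact Or.inr ⟨j - m₁, by omega, key3 j (by omega)⟩

lemma gcw_append {v₁ v₂ : ℕ → X} {m₁ m₂ : ℕ} (hj : v₁ m₁ = v₂ 0) :
    gcw (chApp v₁ m₁ v₂) (m₁ + m₂) = gcw v₁ m₁ + gcw v₂ m₂ := by
  unfold gcw
  rw [Finset.sum_range_add]
  congr 1
  · apply Finset.sum_congr rfl
    intro i hi
    simp only [Finset.mem_range] at hi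
    by_cases h : i + 1 < m₁
    · simp [chApp, hi, h]
    · have : i + 1 = m₁ := by omega
      simp [chApp, hi, h, this, hj]
  · apply Finset.sum_congr rfl
    intro i hi
    have ha : ¬ (m₁ + i < m₁) := by omega
    have hb : ¬ (m₁ + i + 1 < m₁) := by omega
    have h1 : m₁ + i - m₁ = i := by omega
    have h2 : m₁ + i + 1 - m₁ = i + 1 := by omega
    simp [chApp, ha, hb, h1, h2]

/-- Reversal of a good chain. -/
lemma gc_reverse {𝓗 : Set (Set X)} {v : ℕ → X} {m : ℕ} (h : GC 𝓗 v m) :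
    GC 𝓗 (fun i => v (m - i)) m ∧ (fun i => v (m - i)) 0 = v m ∧
      (fun i => v (m - i)) m = v 0 ∧
      ∀ j ≤ m, ∃ j' ≤ m, (fun i => v (m - i)) j = v j' := by
  refine ⟨?_, by simp, by simp, fun j hj => ⟨m - j, by omega, rfl⟩⟩
  intro i hi
  have h1 : m - i = (m - (i+1)) + 1 := by omega
  have h2 := h (m - (i+1)) (by omega)
  simp only []
  rw [h1]
  rcases h2 with hs | hjc
  · left
    rw [dist_comm] at hs
    exact hs
  · exact Or.inr (jcond_symm hjc)

/-- Subdividing a geodesic into unit pieces. -/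
lemma gc_subdivide {𝓗 : Set (Set X)} (hG : GeodesicMS X) (a b : X) :
    ∃ (k : ℕ) (v : ℕ → X), GC 𝓗 v k ∧ v 0 = a ∧ v k = b ∧
      gcw v k ≤ dist a b ∧ (k : ℝ) ≤ dist a b + 1 := by
  obtain ⟨g, hg0, hgd, hgiso⟩ := hG a b
  set ℓ := dist a b with hℓ
  have hℓ0 : 0 ≤ ℓ := dist_nonneg
  set k := max 1 ⌈ℓ⌉₊ with hk
  have hk1 : 1 ≤ k := le_max_left _ _
  have hk0 : (0:ℝ) < k := by positivity
  have hℓk : ℓ ≤ (k : ℝ) := by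
    refine le_trans (Nat.le_ceil ℓ) ?_
    exact_mod_cast le_max_right 1 ⌈ℓ⌉₊
  refine ⟨k, fun i => g (min i k * (ℓ / k)), ?_, by simpa using hg0, ?_, ?_, ?_⟩
  · intro i hi
    left
    have e1 : min i k = i := by simp [min_eq_left (by omega : i ≤ k)]
    have e2 : min (i+1) k = i + 1 := by simp [min_eq_left (by omega : i + 1 ≤ k)]
    have harg : ∀ j : ℕ, j ≤ k → (j : ℝ) * (ℓ / k) ∈ Set.Icc (0:ℝ) ℓ := by
      intro j hjk
      constructor
      · positivity
      · rw [← hℓ] at *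
        calc (j:ℝ) * (ℓ / k) ≤ (k:ℝ) * (ℓ / k) := by
              apply mul_le_mul_of_nonneg_right (by exact_mod_cast hjk) (by positivity)
          _ = ℓ := by field_simp
    have := hgiso ((i:ℝ) * (ℓ / k)) (by rw [hℓ] at *; exact harg i (by omega))
      (((i:ℝ)+1) * (ℓ / k)) (by rw [hℓ] at *; push_cast; exact_mod_cast harg (i+1) (by omega))
    simp only [e1, e2]
    push_cast
    rw [this]
    have : |(i:ℝ) * (ℓ / k) - ((i:ℝ)+1) * (ℓ / k)| = ℓ / k := by
      rw [abs_sub_comm]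
      rw [show ((i:ℝ)+1) * (ℓ / k) - (i:ℝ) * (ℓ / k) = ℓ / k by ring]
      exact abs_of_nonneg (by positivity)
    rw [this]
    rw [div_le_one hk0]
    exact hℓk
  · have e1 : min k k = k := min_self k
    simp only [e1]
    rw [show (k:ℝ) * (ℓ / k) = ℓ by field_simp]
    rw [hℓ] at hgd ⊢
    exact hgd
  · unfold gcw
    have step : ∀ i ∈ Finset.range k,
        min 1 (dist (g (min i k * (ℓ / k))) (g (min (i+1) k * (ℓ / k)))) = ℓ / k := by
      intro i hi
      simp only [Finset.mem_range] at hi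
      have e1 : min i k = i := min_eq_left (by omega)
      have e2 : min (i+1) k = i + 1 := min_eq_left (by omega)
      have harg : ∀ j : ℕ, j ≤ k → (j : ℝ) * (ℓ / k) ∈ Set.Icc (0:ℝ) ℓ := by
        intro j hjk
        refine ⟨by positivity, ?_⟩
        calc (j:ℝ) * (ℓ / k) ≤ (k:ℝ) * (ℓ / k) := by
              apply mul_le_mul_of_nonneg_right (by exact_mod_cast hjk) (by positivity)
          _ = ℓ := by field_simp
      have hiso := hgiso ((i:ℝ) * (ℓ / k)) (by rw [hℓ] at *; exact harg i (by omega))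
        (((i:ℝ)+1) * (ℓ / k)) (by rw [hℓ] at *; push_cast; exact_mod_cast harg (i+1) (by omega))
      have e3 : |(i:ℝ) * (ℓ / k) - ((i:ℝ)+1) * (ℓ / k)| = ℓ / k := by
        rw [abs_sub_comm, show ((i:ℝ)+1) * (ℓ / k) - (i:ℝ) * (ℓ / k) = ℓ / k by ring]
        exact abs_of_nonneg (by positivity)
      have e4 : ℓ / k ≤ 1 := by rw [div_le_one hk0]; exact hℓk
      rw [e1, e2]
      push_cast
      rw [hiso, e3, min_eq_right e4]
    rw [Finset.sum_congr rfl step]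
    simp only [Finset.sum_const, Finset.card_range, nsmul_eq_mul]
    rw [mul_div_cancel₀ _ (ne_of_gt hk0)]
  · have : (⌈ℓ⌉₊ : ℝ) ≤ ℓ + 1 := le_of_lt (Nat.ceil_lt_add_one hℓ0)
    have h1 : (k:ℝ) = max 1 (⌈ℓ⌉₊:ℝ) := by
      rw [hk]
      exact_mod_cast Nat.cast_max ..
    rw [h1]
    apply max_le (by linarith) this

end ElecTrack

namespace ElecTrack
set_option linter.unusedSectionVars false
set_option linter.unusedVariables false
set_option linter.unusedTactic false
variable {X : Type} [MetricSpace X]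

/-- The cost of a block chain. -/
noncomputable def bcost (v : ℕ → X) (τ : ℕ → Bool) (m : ℕ) : ℝ :=
  ∑ i ∈ Finset.range m, (if τ i then (1:ℝ) else dist (v i) (v (i+1)))

lemma bcost_nonneg (v : ℕ → X) (τ : ℕ → Bool) (m : ℕ) : 0 ≤ bcost v τ m :=
  Finset.sum_nonneg fun i _ => by split <;> [exact zero_le_one; exact dist_nonneg]

lemma bcost_peel (v : ℕ → X) (τ : ℕ → Bool) (m : ℕ) :
    bcost v τ (m+1) = bcost (fun i => v (i+1)) (fun i => τ (i+1)) m
      + (if τ 0 then (1:ℝ) else dist (v 0) (v 1)) := by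
  unfold bcost
  rw [Finset.sum_range_succ']

lemma phase1 (𝓗 : Set (Set X)) : ∀ (n : ℕ) (c : ℕ → X),
    ∃ (m : ℕ) (v : ℕ → X) (τ : ℕ → Bool),
      v 0 = c 0 ∧ v m = c n ∧
      (∀ i < m, τ i = true → jcond 𝓗 (v i) (v (i+1))) ∧
      (∀ i, i+1 < m → τ i = false → τ (i+1) = true) ∧
      bcost v τ m ≤ ∑ i ∈ Finset.range n, elecStep 𝓗 (c i) (c (i + 1)) := by
  intro n
  induction n with
  | zero =>
    intro c
    exact ⟨0, fun _ => c 0, fun _ => true, rfl, rfl, by omega, by omega,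
      by simp [bcost]⟩
  | succ n IH =>
    intro c
    obtain ⟨m, v, τ, hv0, hvm, hjc, halt, hcost⟩ := IH (fun i => c (i+1))
    have hsum : ∑ i ∈ Finset.range (n+1), elecStep 𝓗 (c i) (c (i+1))
        = (∑ i ∈ Finset.range n, elecStep 𝓗 (c (i+1)) (c (i+1+1))) + elecStep 𝓗 (c 0) (c 1) := by
      rw [Finset.sum_range_succ']
    by_cases hA : (∃ H ∈ 𝓗, c 0 ∈ H ∧ c 1 ∈ H) ∧ 1 ≤ dist (c 0) (c 1)
    · -- jump step
      have hstep : elecStep 𝓗 (c 0) (c 1) = 1 := by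
        unfold elecStep
        rw [if_pos hA.1, min_eq_left hA.2]
      refine ⟨m+1, fun i => if i = 0 then c 0 else v (i-1),
        fun i => if i = 0 then true else τ (i-1), by simp, by simp [hvm], ?_, ?_, ?_⟩
      · intro i hi ht
        by_cases h0 : i = 0
        · subst h0
          simpa [hv0, jcond] using hA.1
        · have h1 : i - 1 < m := by omega
          have h2 : ¬ (i + 1 = 0) := by omega
          have h3 : i + 1 - 1 = (i-1) + 1 := by omega
          simp only [if_neg h0, if_neg h2, h3]
          apply hjc _ h1
          simpa [h0] using ht
      · intro i hi ht
        by_cases h0 : i = 0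
        · subst h0; simp at ht
        · have h2 : ¬ (i + 1 = 0) := by omega
          have h3 : i + 1 - 1 = (i-1) + 1 := by omega
          simp only [if_neg h2, h3]
          apply halt _ (by omega)
          simpa [h0] using ht
      · have : bcost (fun i => if i = 0 then c 0 else v (i-1))
            (fun i => if i = 0 then true else τ (i-1)) (m+1)
            = bcost v τ m + 1 := by
          rw [bcost_peel]
          simp [bcost]
        rw [this, hsum, hstep]
        linarith [hcost]
    · -- free step
      have hstep : elecStep 𝓗 (c 0) (c 1) = dist (c 0) (c 1) := by
        unfold elecStep
        by_cases hj : ∃ H ∈ 𝓗, c 0 ∈ H ∧ c 1 ∈ H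
        · rw [if_pos hj]
          have : dist (c 0) (c 1) < 1 := by
            by_contra hcon
            exact hA ⟨hj, by linarith [not_lt.mp hcon]⟩
          exact min_eq_right (le_of_lt this)
        · rw [if_neg hj]
      by_cases hm : m = 0
      · -- tail trivial: single free leg
        subst hm
        have hcb : c 1 = c (n+1) := hv0.symm.trans hvm
        refine ⟨1, fun i => if i = 0 then c 0 else c (n+1), fun _ => false,
          by simp, by simp, by simp, by omega, ?_⟩
        have : bcost (fun i => if i = 0 then c 0 else c (n+1)) (fun _ => false) 1
            = dist (c 0) (c (n+1)) := by simp [bcost]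
        rw [this, hsum, hstep, ← hcb]
        have := Finset.sum_nonneg (fun i (_ : i ∈ Finset.range n) =>
          elecStep_nonneg 𝓗 (c (i+1)) (c (i+1+1)))
        linarith
      · by_cases ht0 : τ 0 = true
        · -- prepend free leg
          refine ⟨m+1, fun i => if i = 0 then c 0 else v (i-1),
            fun i => if i = 0 then false else τ (i-1), by simp, by simp [hvm], ?_, ?_, ?_⟩
          · intro i hi ht
            by_cases h0 : i = 0
            · subst h0; simp at ht
            · have h2 : ¬ (i + 1 = 0) := by omega
              have h3 : i + 1 - 1 = (i-1) + 1 := by omega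
              simp only [if_neg h0, if_neg h2, h3]
              apply hjc _ (by omega)
              simpa [h0] using ht
          · intro i hi ht
            by_cases h0 : i = 0
            · subst h0
              simp [ht0]
            · have h2 : ¬ (i + 1 = 0) := by omega
              have h3 : i + 1 - 1 = (i-1) + 1 := by omega
              simp only [if_neg h2, h3]
              apply halt _ (by omega)
              simpa [h0] using ht
          · have : bcost (fun i => if i = 0 then c 0 else v (i-1))
                (fun i => if i = 0 then false else τ (i-1)) (m+1)
                = bcost v τ m + dist (c 0) (v 0) := by
              rw [bcost_peel]
              simp [bcost]
            rw [this, hsum, hstep, hv0]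
            linarith [hcost]
        · -- merge with leading free block
          have ht0' : τ 0 = false := by
            cases h : τ 0
            · rfl
            · exact absurd h ht0
          obtain ⟨m', rfl⟩ : ∃ m', m = m' + 1 := ⟨m - 1, by omega⟩
          refine ⟨m'+1, fun i => if i = 0 then c 0 else v i, τ, by simp,
            by simpa using hvm, ?_, halt, ?_⟩
          · intro i hi ht
            by_cases h0 : i = 0
            · subst h0
              rw [ht0'] at ht
              simp at ht
            · have h2 : ¬ (i + 1 = 0) := by omega
              simp only [if_neg h0, if_neg h2]
              exact hjc _ hi ht
          · have e1 : bcost (fun i => if i = 0 then c 0 else v i) τ (m'+1)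
                = bcost (fun i => v (i+1)) (fun i => τ (i+1)) m'
                  + dist (c 0) (v 1) := by
              rw [bcost_peel, ht0']
              simp [bcost]
            have e2 : bcost v τ (m'+1)
                = bcost (fun i => v (i+1)) (fun i => τ (i+1)) m'
                  + dist (v 0) (v 1) := by
              rw [bcost_peel, ht0']
              simp
            have e3 : dist (c 0) (v 1) ≤ dist (c 0) (c 1) + dist (v 0) (v 1) := by
              rw [← hv0]
              exact dist_triangle _ _ _
            rw [e1, hsum, hstep]
            rw [e2] at hcost
            linarith

lemma gc_single_jump {𝓗 : Set (Set X)} {a b : X} (h : jcond 𝓗 a b) :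
    GC 𝓗 (fun i => if i = 0 then a else b) 1 ∧ gcw (fun i => if i = 0 then a else b) 1 ≤ 1 := by
  constructor
  · intro i hi
    have : i = 0 := by omega
    subst this
    simpa using Or.inr h
  · simp [gcw]

lemma phase2 (𝓗 : Set (Set X)) (hG : GeodesicMS X) : ∀ (m : ℕ) (v : ℕ → X) (τ : ℕ → Bool),
    (∀ i < m, τ i = true → jcond 𝓗 (v i) (v (i+1))) →
    (∀ i, i+1 < m → τ i = false → τ (i+1) = true) →
    ∃ (m' : ℕ) (v' : ℕ → X), GC 𝓗 v' m' ∧ v' 0 = v 0 ∧ v' m' = v m ∧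
      gcw v' m' ≤ bcost v τ m ∧ (m' : ℝ) ≤ 3 * bcost v τ m + 1 := by
  intro m
  induction m using Nat.strong_induction_on with
  | _ m IH =>
  intro v τ hjc halt
  match m, IH with
  | 0, _ =>
    exact ⟨0, v, fun i hi => absurd hi (Nat.not_lt_zero i), rfl, rfl, by simp [gcw, bcost], by simp [bcost]⟩
  | (m+1), IH =>
    have hpeel := bcost_peel v τ m
    by_cases ht0 : τ 0 = true
    · -- leading jump block
      obtain ⟨m₂', v₂', hGC₂, h₂0, h₂m, hw₂, hc₂⟩ :=
        IH m (by omega) (fun i => v (i+1)) (fun i => τ (i+1))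
          (fun i hi ht => hjc (i+1) (by omega) ht)
          (fun i hi ht => halt (i+1) (by omega) ht)
      have hj : jcond 𝓗 (v 0) (v 1) := hjc 0 (by omega) ht0
      obtain ⟨hGCh, hwh⟩ := gc_single_jump hj
      have happ := gc_append hGCh hGC₂ (by simpa using h₂0.symm)
      obtain ⟨hGCa, ha0, ham, -⟩ := happ
      have hwapp := gcw_append (v₁ := fun i => if i = 0 then v 0 else v 1) (m₁ := 1)
        (v₂ := v₂') (m₂ := m₂') (by simpa using h₂0.symm)
      refine ⟨1 + m₂', _, hGCa, by simpa using ha0, by simpa [h₂m] using ham, ?_, ?_⟩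
      · rw [hwapp, hpeel, ht0]
        simp only [if_true]
        have := gcw_nonneg v₂' m₂'
        linarith [hwh, hw₂]
      · rw [hpeel, ht0]
        simp only [if_true]
        push_cast
        have hb := bcost_nonneg (fun i => v (i+1)) (fun i => τ (i+1)) m
        linarith [hc₂]
    · have ht0' : τ 0 = false := by cases h : τ 0; rfl; exact absurd h ht0
      by_cases hm : m = 0
      · -- single free leg
        subst hm
        obtain ⟨k, v', hGC', h0', hk', hw', hcnt'⟩ := gc_subdivide (𝓗 := 𝓗) hG (v 0) (v 1)
        have hb : bcost v τ 1 = dist (v 0) (v 1) := by simp [bcost, ht0']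
        refine ⟨k, v', hGC', h0', hk', by rw [hb]; exact hw', ?_⟩
        rw [hb]
        have := dist_nonneg (x := v 0) (y := v 1)
        linarith
      · -- free block then jump block then rest
        obtain ⟨m'', rfl⟩ : ∃ m'', m = m'' + 1 := ⟨m - 1, by omega⟩
        have ht1 : τ 1 = true := halt 0 (by omega) ht0'
        obtain ⟨m₃', v₃', hGC₃, h₃0, h₃m, hw₃, hc₃⟩ :=
          IH m'' (by omega) (fun i => v (i+2)) (fun i => τ (i+2))
            (fun i hi ht => hjc (i+2) (by omega) ht)
            (fun i hi ht => halt (i+2) (by omega) ht)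
        obtain ⟨k₁, v₁', hGC₁, h₁0, h₁k, hw₁, hcnt₁⟩ := gc_subdivide (𝓗 := 𝓗) hG (v 0) (v 1)
        have hj : jcond 𝓗 (v 1) (v 2) := hjc 1 (by omega) ht1
        obtain ⟨hGCj, hwj⟩ := gc_single_jump hj
        -- append v₁' and the jump leg
        have happ1 := gc_append hGC₁ hGCj (by simpa using h₁k)
        obtain ⟨hGCa1, ha10, ha1m, -⟩ := happ1
        have hwapp1 := gcw_append (v₁ := v₁') (m₁ := k₁)
          (v₂ := fun i => if i = 0 then v 1 else v 2) (m₂ := 1) (by simpa using h₁k)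
        -- append with the rest
        have ha1m' : chApp v₁' k₁ (fun i => if i = 0 then v 1 else v 2) (k₁ + 1) = v₃' 0 := by
          rw [ha1m, h₃0]
          simp
        have happ2 := gc_append hGCa1 hGC₃ ha1m'
        obtain ⟨hGCa2, ha20, ha2m, -⟩ := happ2
        have hwapp2 := gcw_append (v₁ := chApp v₁' k₁ (fun i => if i = 0 then v 1 else v 2))
          (m₁ := k₁ + 1) (v₂ := v₃') (m₂ := m₃') ha1m'
        have hbc : bcost v τ (m''+1+1) = dist (v 0) (v 1) + 1
            + bcost (fun i => v (i+2)) (fun i => τ (i+2)) m'' := by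
          rw [bcost_peel, ht0']
          have := bcost_peel (fun i => v (i+1)) (fun i => τ (i+1)) m''
          rw [this, ht1]
          simp [bcost]
          ring
        refine ⟨k₁ + 1 + m₃', _, hGCa2, ?_, ?_, ?_, ?_⟩
        · rw [ha20, ha10, h₁0]
        · rw [ha2m, h₃m]
        · rw [hwapp2, hwapp1, hbc]
          linarith
        · rw [hbc]
          push_cast
          have hd := dist_nonneg (x := v 0) (y := v 1)
          have hb := bcost_nonneg (fun i => v (i+2)) (fun i => τ (i+2)) m''
          linarith

/-- Normal form for electric chains. -/
lemma normalize {𝓗 : Set (Set X)} (hG : GeodesicMS X) {a b : X} {e : ℝ}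
    (h : elecDist 𝓗 a b < e) :
    ∃ (m : ℕ) (v : ℕ → X), GC 𝓗 v m ∧ v 0 = a ∧ v m = b ∧ (m : ℝ) ≤ 3 * e + 3 ∧
      ∀ j ≤ m, elecDist 𝓗 a (v j) + elecDist 𝓗 (v j) b ≤ e := by
  obtain ⟨r, hr, hre⟩ := exists_chain_lt 𝓗 h
  have hr0 : 0 ≤ r := chainCosts_nonneg 𝓗 a b r hr
  obtain ⟨n, c, hc0, hcn, rfl⟩ := hr
  obtain ⟨m₁, v₁, τ, hv0, hvm, hjc, halt, hcost⟩ := phase1 𝓗 n c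
  obtain ⟨m, v, hGC, h0, hm, hw, hcnt⟩ := phase2 𝓗 hG m₁ v₁ τ hjc halt
  have hb0 := bcost_nonneg v₁ τ m₁
  refine ⟨m, v, hGC, by rw [h0, hv0, hc0], by rw [hm, hvm, hcn], by linarith, ?_⟩
  intro j hj
  have := gc_elec_ends hGC hj
  rw [h0, hm, hv0, hvm, hc0, hcn] at this
  linarith

lemma isGeodesicSeg_const (z : X) : IsGeodesicSeg (fun _ => z) z z := by
  refine ⟨rfl, rfl, ?_⟩
  intro s hs t ht
  simp only [dist_self] at hs ht ⊢
  have hs' : s = 0 := le_antisymm hs.2 hs.1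
  have ht' : t = 0 := le_antisymm ht.2 ht.1
  rw [hs', ht']
  simp

lemma geodImage_const (z : X) : geodImage (fun _ => z) z z = {z} := by
  unfold geodImage
  apply Set.eq_singleton_iff_nonempty_unique_mem.mpr
  constructor
  · exact ⟨z, 0, by simp [dist_nonneg]⟩
  · rintro w ⟨t, ht, rfl⟩
    rfl

lemma elec_le_of_near_leg {𝓗 : Set (Set X)} {C : ℝ} (hQ : ∀ H ∈ 𝓗, QuasiconvexSubset C H)
    (hC0 : 0 ≤ C) {a b : X} {g : ℝ → X} (hg : IsGeodesicSeg g a b)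
    (hleg : dist a b ≤ 1 ∨ jcond 𝓗 a b) {q : X} (hq : q ∈ geodImage g a b) :
    elecDist 𝓗 q b ≤ C + 1 := by
  rcases hleg with hshort | hj
  · obtain ⟨t, ht, rfl⟩ := hq
    have hiso := hg.2.2 t ht (dist a b) ⟨dist_nonneg, le_refl _⟩
    rw [hg.2.1] at hiso
    refine le_trans (elecDist_le_dist 𝓗 _ _) ?_
    rw [hiso]
    have ht1 := ht.1
    have ht2 := ht.2
    have hd : (0:ℝ) ≤ dist a b := dist_nonneg
    have : |t - dist a b| ≤ dist a b := by
      rw [abs_le]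
      constructor
      · linarith
      · linarith
    linarith
  · obtain ⟨H, hH, ha, hb⟩ := hj
    obtain ⟨z, hz, hdz⟩ := hQ H hH a ha b hb g hg q hq
    have h1 : elecDist 𝓗 q z ≤ C := le_trans (elecDist_le_dist 𝓗 _ _) hdz
    have h2 : elecDist 𝓗 z b ≤ 1 := by
      refine le_trans (elecDist_le_elecStep 𝓗 _ _) ?_
      unfold elecStep
      rw [if_pos ⟨H, hH, hz, hb⟩]
      exact min_le_left _ _
    have := elecDist_triangle 𝓗 q z b
    linarith

/-- Thinness of polygons over good chains. -/
lemma polygon {𝓗 : Set (Set X)} {δ C : ℝ} (hG : GeodesicMS X) (hyp : DeltaHyperbolic X δ)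
    (hQ : ∀ H ∈ 𝓗, QuasiconvexSubset C H) (hδ0 : 0 ≤ δ) (hC0 : 0 ≤ C) :
    ∀ (m : ℕ), 1 ≤ m → ∀ (v : ℕ → X), GC 𝓗 v m → ∀ (S : ℝ → X),
      IsGeodesicSeg S (v 0) (v m) → ∀ p ∈ geodImage S (v 0) (v m),
      ∃ j ≤ m, elecDist 𝓗 p (v j) ≤ δ * (Nat.clog 2 m + 1) + C + 1 := by
  intro m
  induction m using Nat.strong_induction_on with
  | _ m IH =>
  intro hm v hGC S hS p hp
  by_cases hm1 : m = 1
  · subst hm1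
    obtain ⟨g, hg⟩ := hG (v 0) (v 1)
    obtain ⟨q, hq, hdpq⟩ := hyp (v 0) (v 1) (v 1) g (fun _ => v 1) S hg
      (isGeodesicSeg_const (v 1)) hS p hp
    have hq' : elecDist 𝓗 q (v 1) ≤ C + 1 := by
      rcases hq with hq | hq
      · exact elec_le_of_near_leg hQ hC0 hg (hGC 0 (by omega)) hq
      · rw [geodImage_const] at hq
        have hq2 : q = v 1 := hq
        rw [hq2, elecDist_self]
        linarith
    refine ⟨1, le_refl _, ?_⟩
    have h1 : elecDist 𝓗 p q ≤ δ := le_trans (elecDist_le_dist 𝓗 _ _) hdpq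
    have h2 := elecDist_triangle 𝓗 p q (v 1)
    simp only [Nat.clog_one_right]
    push_cast
    linarith
  · have hm2 : 2 ≤ m := by omega
    set k := (m+1)/2 with hk
    have hk1 : 1 ≤ k := by omega
    have hkm : k < m := by omega
    have hmk1 : 1 ≤ m - k := by omega
    have hmkk : m - k ≤ k := by omega
    have hclog : Nat.clog 2 m = Nat.clog 2 k + 1 := by
      have := Nat.clog_of_two_le (b := 2) (by norm_num) hm2
      simpa using this
    obtain ⟨g, hg⟩ := hG (v 0) (v k)
    obtain ⟨g', hg'⟩ := hG (v k) (v m)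
    obtain ⟨q, hq, hdpq⟩ := hyp (v 0) (v k) (v m) g g' S hg hg' hS p hp
    have h1 : elecDist 𝓗 p q ≤ δ := le_trans (elecDist_le_dist 𝓗 _ _) hdpq
    rcases hq with hq | hq
    · obtain ⟨j, hj, hb⟩ := IH k hkm hk1 v (fun i hi => hGC i (by omega)) g hg q hq
      refine ⟨j, by omega, ?_⟩
      have h2 := elecDist_triangle 𝓗 p q (v j)
      rw [hclog]
      push_cast
      linarith
    · have hGC' : GC 𝓗 (fun i => v (k + i)) (m - k) := by
        intro i hi
        exact hGC (k + i) (by omega)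
      have hkm' : k + (m - k) = m := by omega
      have hg'' : IsGeodesicSeg g' ((fun i => v (k + i)) 0) ((fun i => v (k + i)) (m - k)) := by
        simpa [hkm'] using hg'
      have hq' : q ∈ geodImage g' ((fun i => v (k + i)) 0) ((fun i => v (k + i)) (m - k)) := by
        simpa [hkm'] using hq
      obtain ⟨j, hj, hb⟩ := IH (m - k) (by omega) hmk1 (fun i => v (k + i)) hGC' g' hg'' q hq'
      refine ⟨k + j, by omega, ?_⟩
      have h2 := elecDist_triangle 𝓗 p q (v (k + j))
      have h3 : (Nat.clog 2 (m - k) : ℝ) ≤ (Nat.clog 2 k : ℝ) :=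
        Nat.cast_le.mpr (Nat.clog_mono_right 2 hmkk)
      rw [hclog]
      push_cast
      have hb' : elecDist 𝓗 q (v (k + j)) ≤ δ * ((Nat.clog 2 (m - k) : ℝ) + 1) + C + 1 := hb
      nlinarith [hb', h3, hδ0]

lemma clog_le_sqrt (n : ℕ) : (Nat.clog 2 n : ℝ) ≤ 3 * Real.sqrt n + 1 := by
  by_cases hn : n ≤ 1
  · have h0 : Nat.clog 2 n = 0 := by
      interval_cases n
      · exact Nat.clog_zero_right 2
      · exact Nat.clog_one_right 2
    rw [h0]
    push_cast
    positivity
  · push_neg at hn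
    have hn2 : 2 ≤ n := hn
    have hc1 : 1 ≤ Nat.clog 2 n := Nat.clog_pos (by norm_num) hn2
    have hp := Nat.pow_pred_clog_lt_self (b := 2) (by norm_num) (x := n) hn
    set c := Nat.clog 2 n with hcdef
    have hpR : (2:ℝ) ^ (c - 1) < (n:ℝ) := by
      have : ((2 ^ (c-1) : ℕ) : ℝ) < (n : ℝ) := by exact_mod_cast hp
      simpa using this
    have hlog : ((c:ℝ) - 1) * Real.log 2 < Real.log n := by
      have := Real.log_lt_log (by positivity) hpR
      rw [Real.log_pow] at this
      have hcast : ((c - 1 : ℕ) : ℝ) = (c:ℝ) - 1 := by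
        push_cast [Nat.cast_sub hc1]
        ring
      rw [hcast] at this
      exact this
    have hs1 : 1 ≤ Real.sqrt n := Real.one_le_sqrt.mpr (by exact_mod_cast le_trans one_le_two hn2)
    have hsql : Real.log n ≤ 2 * (Real.sqrt n - 1) := by
      have hsq : Real.sqrt n ^ 2 = (n:ℝ) := Real.sq_sqrt (by positivity)
      have := Real.log_le_sub_one_of_pos (show (0:ℝ) < Real.sqrt n by linarith)
      calc Real.log n = Real.log (Real.sqrt n ^ 2) := by rw [hsq]
        _ = 2 * Real.log (Real.sqrt n) := by rw [Real.log_pow]; push_cast; ring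
        _ ≤ 2 * (Real.sqrt n - 1) := by linarith
    have hl2 : (0.69:ℝ) < Real.log 2 := by
      have := Real.log_two_gt_d9
      linarith
    have hcc : (1:ℝ) ≤ (c:ℝ) := by exact_mod_cast hc1
    nlinarith [hlog, hsql, hl2, hs1, hcc]

/-- Subsegments of geodesics are geodesics. -/
lemma isGeodesicSeg_sub {γ : ℝ → X} {x y : X} (hγ : IsGeodesicSeg γ x y) {u₁ u₂ : ℝ}
    (h0 : 0 ≤ u₁) (h12 : u₁ ≤ u₂) (h2 : u₂ ≤ dist x y) :
    dist (γ u₁) (γ u₂) = u₂ - u₁ ∧ IsGeodesicSeg (fun t => γ (u₁ + t)) (γ u₁) (γ u₂) := by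
  have hd : dist (γ u₁) (γ u₂) = u₂ - u₁ := by
    rw [hγ.2.2 u₁ ⟨h0, le_trans h12 h2⟩ u₂ ⟨le_trans h0 h12, h2⟩]
    rw [abs_sub_comm, abs_of_nonneg (by linarith)]
  refine ⟨hd, by simp, ?_, ?_⟩
  · rw [hd]
    show γ (u₁ + (u₂ - u₁)) = γ u₂
    rw [show u₁ + (u₂ - u₁) = u₂ by ring]
  · intro s hs t ht
    rw [hd] at hs ht
    have := hγ.2.2 (u₁ + s) ⟨by linarith [hs.1], by linarith [hs.2]⟩
      (u₁ + t) ⟨by linarith [ht.1], by linarith [ht.2]⟩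
    rw [this, show u₁ + s - (u₁ + t) = s - t by ring]

/-- Electric distance functions to finite sets along a geodesic are 1-Lipschitz. -/
lemma inf'_elec_lipOn (𝓗 : Set (Set X)) {γ : ℝ → X} {x y : X} (hγ : IsGeodesicSeg γ x y)
    {ι : Type} {W : Finset ι} (hW : W.Nonempty) (pt : ι → X) :
    LipschitzOnWith 1 (fun u => W.inf' hW fun i => elecDist 𝓗 (γ u) (pt i))
      (Set.Icc 0 (dist x y)) := by
  apply LipschitzOnWith.of_dist_le_mul
  intro u hu u' hu'
  have key : ∀ a ∈ Set.Icc (0:ℝ) (dist x y), ∀ b ∈ Set.Icc (0:ℝ) (dist x y),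
      (W.inf' hW fun i => elecDist 𝓗 (γ a) (pt i))
        ≤ (W.inf' hW fun i => elecDist 𝓗 (γ b) (pt i)) + |a - b| := by
    intro a ha b hb
    obtain ⟨i₀, hi₀, hmin⟩ := Finset.exists_mem_eq_inf' hW (fun i => elecDist 𝓗 (γ b) (pt i))
    have h1 : (W.inf' hW fun i => elecDist 𝓗 (γ a) (pt i)) ≤ elecDist 𝓗 (γ a) (pt i₀) :=
      Finset.inf'_le _ hi₀
    have h2 := elecDist_triangle 𝓗 (γ a) (γ b) (pt i₀)
    have h3 : elecDist 𝓗 (γ a) (γ b) ≤ |a - b| := by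
      refine le_trans (elecDist_le_dist 𝓗 _ _) ?_
      rw [hγ.2.2 a ha b hb]
    rw [← hmin] at h2
    linarith
  rw [NNReal.coe_one, one_mul, Real.dist_eq, Real.dist_eq]
  rw [abs_le]
  constructor
  · have := key u' hu' u hu
    rw [abs_sub_comm] at this
    linarith
  · have := key u hu u' hu'
    linarith

/-- Solving the master inequality. -/
lemma master_solve {R A B c₄ dd : ℝ} (hR0 : 0 ≤ R) (hA : 0 ≤ A) (hB : 0 ≤ B)
    (hc4 : 0 ≤ c₄) (hdd : 0 ≤ dd)
    (h : R ≤ 12 * dd * Real.sqrt (A * R + B) + c₄) :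
    R ≤ 2 * c₄ + 576 * dd^2 * A + 24 * dd * Real.sqrt B := by
  by_cases hR : R ≤ 2 * c₄
  · have h1 : (0:ℝ) ≤ 576 * dd^2 * A := by positivity
    have h2 : (0:ℝ) ≤ 24 * dd * Real.sqrt B := by positivity
    linarith
  · push_neg at hR
    have hARB : (0:ℝ) ≤ A * R + B := by positivity
    have hs := Real.sq_sqrt hARB
    have hs0 : (0:ℝ) ≤ Real.sqrt (A * R + B) := Real.sqrt_nonneg _
    have h2 : R / 2 ≤ 12 * dd * Real.sqrt (A * R + B) := by linarith
    have h3 : R^2 / 4 ≤ 144 * dd^2 * (A * R + B) := by nlinarith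
    -- R^2 ≤ 576 dd^2 A R + 576 dd^2 B
    have hsB := Real.sq_sqrt hB
    have hsB0 : (0:ℝ) ≤ Real.sqrt B := Real.sqrt_nonneg _
    by_contra hcon
    push_neg at hcon
    have hRpos : 0 < R := lt_of_le_of_lt (by positivity) hR
    have h4 : 24 * dd * Real.sqrt B ≤ R := by nlinarith
    have h5 : R^2 ≤ 576*dd^2*A*R + 576*dd^2*B := by nlinarith
    have h6 : 576*dd^2*B ≤ (24*dd*Real.sqrt B) * R := by
      nlinarith [mul_le_mul_of_nonneg_left h4 (show (0:ℝ) ≤ 24*dd*Real.sqrt B by positivity)]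
    nlinarith [h5, h6, hRpos, hcon]

lemma gc_trivial (𝓗 : Set (Set X)) (v : ℕ → X) : GC 𝓗 v 0 :=
  fun i hi => absurd hi (Nat.not_lt_zero i)

lemma gc_prefix {𝓗 : Set (Set X)} {v : ℕ → X} {m : ℕ} (h : GC 𝓗 v m) {j : ℕ} (hj : j ≤ m) :
    GC 𝓗 v j := fun i hi => h i (lt_of_lt_of_le hi hj)

noncomputable def cAA (P : ℝ) : ℝ := 20*(P+1)^2
noncomputable def cBB (P : ℝ) : ℝ := 40*(P+1)^3
noncomputable def cK1 (δ C P : ℝ) : ℝ :=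
  2*(8*δ+4*C+6) + 576*δ^2*(cAA P) + 24*δ*Real.sqrt (cBB P)

lemma cK1_nonneg {δ C P : ℝ} (hδ : 0 < δ) (hC : 0 < C) : 0 ≤ cK1 δ C P := by
  unfold cK1 cAA
  positivity

set_option maxHeartbeats 1600000 in
/-- Step A: every point of the geodesic is electrically close to a grid point of β. -/
lemma stepA {𝓗 : Set (Set X)} {δ C P : ℝ} (hG : GeodesicMS X) (hyp : DeltaHyperbolic X δ)
    (hQ : ∀ H ∈ 𝓗, QuasiconvexSubset C H) (hδ : 0 < δ) (hC : 0 < C) (hP : 1 ≤ P)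
    {x y : X} {T : ℝ} {β γ : ℝ → X} (hT : 0 ≤ T) (hβ0 : β 0 = x) (hβT : β T = y)
    (hqg : ElecQuasigeodesic 𝓗 P β T) (hγ : IsGeodesicSeg γ x y) :
    ∃ (N : ℕ) (t : ℕ → ℝ), 1 ≤ N ∧ (∀ i, t i ∈ Set.Icc 0 T) ∧ t 0 = 0 ∧ t N = T ∧
      ∀ u ∈ Set.Icc (0:ℝ) (dist x y), ∃ i ≤ N,
        elecDist 𝓗 (γ u) (β (t i)) ≤ cK1 δ C P + 2*P + 1 := by
  classical
  have hP0 : (0:ℝ) < P := lt_of_lt_of_le zero_lt_one hP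
  set L := dist x y with hL
  have hL0 : 0 ≤ L := dist_nonneg
  set N := max 1 ⌈T⌉₊ with hN
  have hN1 : 1 ≤ N := le_max_left _ _
  set t : ℕ → ℝ := fun i => min (i:ℝ) T with ht
  have htmem : ∀ i, t i ∈ Set.Icc (0:ℝ) T :=
    fun i => ⟨le_min (Nat.cast_nonneg i) hT, min_le_right _ _⟩
  have ht0 : t 0 = 0 := by simp [ht, hT]
  have htN : t N = T := by
    apply min_eq_right
    refine le_trans (Nat.le_ceil T) ?_
    exact_mod_cast Nat.cast_le.mpr (le_max_right 1 ⌈T⌉₊)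
  have htub : ∀ i : ℕ, t i ≤ i := fun i => min_le_left _ _
  have htlb : ∀ i ≤ N, (i:ℝ) - 1 ≤ t i := by
    intro i hi
    apply le_min (by linarith [Nat.cast_nonneg (α := ℝ) i])
    by_cases h1 : i ≤ 1
    · have : (i:ℝ) ≤ 1 := by exact_mod_cast h1
      linarith
    · have hiceil : i ≤ ⌈T⌉₊ := by
        rcases max_cases 1 ⌈T⌉₊ with ⟨he, _⟩ | ⟨he, _⟩
        · omega
        · omega
      have h2 : (i:ℝ) ≤ (⌈T⌉₊:ℝ) := by exact_mod_cast hiceil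
      have h3 : (⌈T⌉₊:ℝ) < T + 1 := Nat.ceil_lt_add_one hT
      linarith
  have htdiff : ∀ i : ℕ, |t i - t (i+1)| ≤ 1 := by
    intro i
    have hmono : t i ≤ t (i+1) := by
      apply le_min
      · exact le_trans (min_le_left _ _) (by push_cast; linarith)
      · exact min_le_right _ _
    rw [abs_sub_comm, abs_of_nonneg (by linarith)]
    rcases le_total ((i:ℝ)) T with hc | hc
    · have e1 : t i = i := min_eq_left hc
      have e2 : t (i+1) ≤ (i:ℝ)+1 := by
        refine le_trans (min_le_left _ _) ?_
        push_cast
        linarith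
      linarith
    · have e1 : t i = T := min_eq_right hc
      have e2 : t (i+1) = T := min_eq_right (by push_cast; linarith)
      rw [e1, e2]
      norm_num
  -- grid chains
  have helec : ∀ i : ℕ, elecDist 𝓗 (β (t i)) (β (t (i+1))) < 2*P+1 := by
    intro i
    have := (hqg (t i) (htmem i) (t (i+1)) (htmem (i+1))).2
    have h2 : P * |t i - t (i+1)| ≤ P * 1 :=
      mul_le_mul_of_nonneg_left (htdiff i) (le_of_lt hP0)
    linarith
  choose mfun vfun hσGC hσ0 hσm hσcnt hσvert using fun i : ℕ => normalize hG (helec i)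
  set W : Finset X :=
    (Finset.range N).biUnion (fun i => (Finset.range (mfun i + 1)).image (vfun i)) with hW
  have hWmem : ∀ i < N, ∀ j ≤ mfun i, vfun i j ∈ W := by
    intro i hi j hj
    rw [hW]
    apply Finset.mem_biUnion.mpr
    exact ⟨i, Finset.mem_range.mpr hi, Finset.mem_image.mpr
      ⟨j, Finset.mem_range.mpr (by omega), rfl⟩⟩
  have hWne : W.Nonempty := ⟨vfun 0 0, hWmem 0 (by omega) 0 (by omega)⟩
  have hWx : x ∈ W := by
    have : vfun 0 0 = x := by rw [hσ0 0, ht0, hβ0]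
    rw [← this]
    exact hWmem 0 (by omega) 0 (by omega)
  have hWy : y ∈ W := by
    have : vfun (N-1) (mfun (N-1)) = y := by
      rw [hσm (N-1)]
      have : N - 1 + 1 = N := by omega
      rw [this, htN, hβT]
    rw [← this]
    exact hWmem (N-1) (by omega) (mfun (N-1)) (by omega)
  have hWgrid : ∀ z ∈ W, ∃ i ≤ N, elecDist 𝓗 z (β (t i)) ≤ 2*P+1 := by
    intro z hz
    rw [hW] at hz
    obtain ⟨i, hiN, hz2⟩ := Finset.mem_biUnion.mp hz
    obtain ⟨j, hj, rfl⟩ := Finset.mem_image.mp hz2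
    simp only [Finset.mem_range] at hiN hj
    have hvert := hσvert i j (by omega)
    have h1 := elecDist_nonneg 𝓗 (vfun i j) (β (t (i+1)))
    refine ⟨i, by omega, ?_⟩
    rw [elecDist_comm]
    linarith [le_of_lt (helec i), hvert]
  -- the distance function to W and its maximum
  set ρ : ℝ → ℝ := fun u => W.inf' hWne (fun z => elecDist 𝓗 (γ u) z) with hρ
  have hρlip : LipschitzOnWith 1 ρ (Set.Icc 0 L) := inf'_elec_lipOn 𝓗 hγ hWne id
  obtain ⟨u₀, hu₀mem, hu₀max⟩ := IsCompact.exists_isMaxOn (isCompact_Icc (a := (0:ℝ)) (b := L))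
    ⟨0, le_refl 0, hL0⟩ hρlip.continuousOn
  set R := ρ u₀ with hR
  have hρ0 : ∀ u, 0 ≤ ρ u := by
    intro u
    apply Finset.le_inf'
    intro z hz
    exact elecDist_nonneg 𝓗 _ _
  have hR0 : 0 ≤ R := hρ0 u₀
  have hρle : ∀ u ∈ Set.Icc (0:ℝ) L, ρ u ≤ R := fun u hu => hu₀max hu
  have hρleW : ∀ u, ∀ z ∈ W, ρ u ≤ elecDist 𝓗 (γ u) z := by
    intro u z hz
    exact Finset.inf'_le _ hz
  have hβtW : ∀ a ≤ N, β (t a) ∈ W := by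
    intro a ha
    by_cases haN : a < N
    · rw [← hσ0 a]
      exact hWmem a haN 0 (by omega)
    · have haa : a = N := by omega
      rw [haa, htN, hβT]
      exact hWy
  have gridF : ∀ (k : ℕ), ∀ (a : ℕ), a + k ≤ N → ∃ (mv : ℕ) (vv : ℕ → X), GC 𝓗 vv mv ∧
      vv 0 = β (t a) ∧ vv mv = β (t (a+k)) ∧ (mv:ℝ) ≤ k*(6*P+6) ∧ ∀ j ≤ mv, vv j ∈ W := by
    intro k
    induction k with
    | zero =>
      intro a ha
      refine ⟨0, fun _ => β (t a), gc_trivial _ _, rfl, rfl, by simp, ?_⟩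
      intro j hj
      have : j = 0 := by omega
      subst this
      exact hβtW a (by omega)
    | succ k IHk =>
      intro a ha
      obtain ⟨mv, vv, hgc, h0, hm, hcnt, hvert⟩ := IHk a (by omega)
      have hjoin : vv mv = vfun (a+k) 0 := by rw [hm, hσ0]
      obtain ⟨hGCa, ha0, ham, hadecomp⟩ := gc_append hgc (hσGC (a+k)) hjoin
      refine ⟨mv + mfun (a+k), _, hGCa, by rw [ha0, h0], ?_, ?_, ?_⟩
      · rw [ham, hσm, show a + k + 1 = a + (k+1) from by omega]
      · have hσc := hσcnt (a+k)
        push_cast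
        push_cast at hcnt hσc
        nlinarith [hP0]
      · intro j hj
        rcases hadecomp j hj with ⟨j', hj', he⟩ | ⟨j', hj', he⟩
        · rw [he]
          exact hvert j' hj'
        · rw [he]
          exact hWmem (a+k) (by omega) j' hj'
  -- The bootstrap: R is bounded by the universal constant.
  have hmain : R ≤ cK1 δ C P := by
    set w := γ u₀ with hw
    set f : ℝ → ℝ := fun u => elecDist 𝓗 (γ u) w with hf
    have hflip : LipschitzOnWith 1 f (Set.Icc 0 L) := by
      have h := inf'_elec_lipOn 𝓗 hγ (W := ({0} : Finset ℕ)) (by simp) (fun _ => w)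
      have he : (fun u => ({0} : Finset ℕ).inf' (by simp) (fun _ => elecDist 𝓗 (γ u) w)) = f := by
        funext u
        rw [Finset.inf'_const]
      rwa [he] at h
    have hfu₀ : f u₀ = 0 := elecDist_self 𝓗 w
    have hfx : R ≤ f 0 := by
      have h1 : ρ u₀ ≤ elecDist 𝓗 (γ u₀) x := hρleW u₀ x hWx
      have h2 : f 0 = elecDist 𝓗 x w := by rw [hf]; simp only []; rw [hγ.1]
      rw [h2, elecDist_comm]
      exact h1
    have hfy : R ≤ f L := by
      have h1 : ρ u₀ ≤ elecDist 𝓗 (γ u₀) y := hρleW u₀ y hWy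
      have h2 : f L = elecDist 𝓗 y w := by rw [hf]; simp only []; rw [hL, hγ.2.1]
      rw [h2, elecDist_comm]
      exact h1
    obtain ⟨u₁, hu₁mem, hu₁⟩ : ∃ u₁ ∈ Set.Icc 0 u₀, f u₁ = R/2 := by
      have hcont : ContinuousOn f (Set.Icc 0 u₀) :=
        hflip.continuousOn.mono (Set.Icc_subset_Icc_right hu₀mem.2)
      have him := intermediate_value_Icc' hu₀mem.1 hcont
      have : R/2 ∈ Set.Icc (f u₀) (f 0) := ⟨by rw [hfu₀]; linarith, by linarith⟩
      obtain ⟨u₁, hu₁mem, hu₁⟩ := him this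
      exact ⟨u₁, hu₁mem, hu₁⟩
    obtain ⟨u₂, hu₂mem, hu₂⟩ : ∃ u₂ ∈ Set.Icc u₀ L, f u₂ = R/2 := by
      have hcont : ContinuousOn f (Set.Icc u₀ L) :=
        hflip.continuousOn.mono (Set.Icc_subset_Icc_left hu₀mem.1)
      have him := intermediate_value_Icc hu₀mem.2 hcont
      have : R/2 ∈ Set.Icc (f u₀) (f L) := ⟨by rw [hfu₀]; linarith, by linarith⟩
      obtain ⟨u₂, hu₂mem, hu₂⟩ := him this
      exact ⟨u₂, hu₂mem, hu₂⟩
    have hu₁L : u₁ ∈ Set.Icc (0:ℝ) L := ⟨hu₁mem.1, le_trans hu₁mem.2 hu₀mem.2⟩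
    have hu₂L : u₂ ∈ Set.Icc (0:ℝ) L := ⟨le_trans hu₀mem.1 hu₂mem.1, hu₂mem.2⟩
    have hE : elecDist 𝓗 (γ u₁) (γ u₂) ≤ R := by
      have h1 := elecDist_triangle 𝓗 (γ u₁) (γ u₀) (γ u₂)
      have h2 : elecDist 𝓗 (γ u₀) (γ u₂) = f u₂ := elecDist_comm 𝓗 _ _
      have h3 : elecDist 𝓗 (γ u₁) (γ u₀) = f u₁ := rfl
      rw [h2, h3, hu₁, hu₂] at h1
      linarith
    -- connectors
    obtain ⟨w₁, hw₁W, hw₁eq⟩ := Finset.exists_mem_eq_inf' hWne (fun z => elecDist 𝓗 (γ u₁) z)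
    obtain ⟨w₂, hw₂W, hw₂eq⟩ := Finset.exists_mem_eq_inf' hWne (fun z => elecDist 𝓗 (γ u₂) z)
    have hρu₁ : elecDist 𝓗 (γ u₁) w₁ ≤ R := by
      rw [← hw₁eq]
      exact hρle u₁ hu₁L
    have hρu₂ : elecDist 𝓗 (γ u₂) w₂ ≤ R := by
      rw [← hw₂eq]
      exact hρle u₂ hu₂L
    obtain ⟨mc₁, vc₁, hGCc₁, hc₁0, hc₁m, hc₁cnt, hc₁vert⟩ :=
      normalize hG (show elecDist 𝓗 (γ u₁) w₁ < R + 1 by linarith)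
    obtain ⟨mc₂, vc₂, hGCc₂, hc₂0, hc₂m, hc₂cnt, hc₂vert⟩ :=
      normalize hG (show elecDist 𝓗 (γ u₂) w₂ < R + 1 by linarith)
    -- grid indices of w₁ and w₂
    obtain ⟨i₁, hi₁N, hz₁⟩ := Finset.mem_biUnion.mp (by rw [hW] at hw₁W; exact hw₁W)
    obtain ⟨j₁, hj₁r, hv₁⟩ := Finset.mem_image.mp hz₁
    obtain ⟨i₂, hi₂N, hz₂⟩ := Finset.mem_biUnion.mp (by rw [hW] at hw₂W; exact hw₂W)
    obtain ⟨j₂, hj₂r, hv₂⟩ := Finset.mem_image.mp hz₂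
    rw [Finset.mem_range] at hi₁N hi₂N hj₁r hj₂r
    have hj₁ : j₁ ≤ mfun i₁ := by omega
    have hj₂ : j₂ ≤ mfun i₂ := by omega
    have hbw₁ : elecDist 𝓗 (β (t i₁)) w₁ ≤ 2*P+1 := by
      have h1 := hσvert i₁ j₁ hj₁
      rw [hv₁] at h1
      have h2 := elecDist_nonneg 𝓗 w₁ (β (t (i₁+1)))
      linarith
    have hbw₂ : elecDist 𝓗 (β (t i₂)) w₂ ≤ 2*P+1 := by
      have h1 := hσvert i₂ j₂ hj₂
      rw [hv₂] at h1
      have h2 := elecDist_nonneg 𝓗 w₂ (β (t (i₂+1)))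
      linarith
    -- window bound
    have htt : elecDist 𝓗 (β (t i₁)) (β (t i₂)) ≤ 3*R + 4*P + 2 := by
      have T1 := elecDist_triangle 𝓗 (β (t i₁)) w₁ (β (t i₂))
      have T2 := elecDist_triangle 𝓗 w₁ (γ u₁) (β (t i₂))
      have T3 := elecDist_triangle 𝓗 (γ u₁) (γ u₂) (β (t i₂))
      have T4 := elecDist_triangle 𝓗 (γ u₂) w₂ (β (t i₂))
      have e1 : elecDist 𝓗 w₁ (γ u₁) = elecDist 𝓗 (γ u₁) w₁ := elecDist_comm 𝓗 _ _
      have e2 : elecDist 𝓗 w₂ (β (t i₂)) = elecDist 𝓗 (β (t i₂)) w₂ := elecDist_comm 𝓗 _ _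
      rw [e1] at T2
      rw [e2] at T4
      linarith
    have htdist : |t i₁ - t i₂| ≤ P*(3*R+5*P+2) := by
      have hlow := (hqg (t i₁) (htmem i₁) (t i₂) (htmem i₂)).1
      have h1 : (1/P) * |t i₁ - t i₂| ≤ 3*R + 5*P + 2 := by linarith
      have h2 := mul_le_mul_of_nonneg_left h1 (le_of_lt hP0)
      have h3 : P * ((1/P) * |t i₁ - t i₂|) = |t i₁ - t i₂| := by
        field_simp
      rw [h3] at h2
      exact h2
    have hii : |(i₁:ℝ) - (i₂:ℝ)| ≤ P*(3*R+5*P+2) + 1 := by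
      rcases le_total i₁ i₂ with hc | hc
      · have l1 := htlb i₂ (by omega)
        have l2 := htub i₁
        have l3 : t i₂ - t i₁ ≤ |t i₁ - t i₂| := by
          rw [abs_sub_comm]
          exact le_abs_self _
        have hcR : (i₁:ℝ) ≤ (i₂:ℝ) := Nat.cast_le.mpr hc
        have l4 : |(i₁:ℝ) - (i₂:ℝ)| = (i₂:ℝ) - i₁ := by
          rw [abs_sub_comm]
          exact abs_of_nonneg (by linarith)
        rw [l4]
        linarith
      · have l1 := htlb i₁ (by omega)
        have l2 := htub i₂
        have l3 : t i₁ - t i₂ ≤ |t i₁ - t i₂| := le_abs_self _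
        have hcR : (i₂:ℝ) ≤ (i₁:ℝ) := Nat.cast_le.mpr hc
        have l4 : |(i₁:ℝ) - (i₂:ℝ)| = (i₁:ℝ) - i₂ :=
          abs_of_nonneg (by linarith)
        rw [l4]
        linarith
    -- middle chain along the grid
    obtain ⟨mm, vm, hGCm, hm0, hmm, hmcnt, hmvert⟩ :
        ∃ mm vm, GC 𝓗 vm mm ∧ vm 0 = β (t i₁) ∧ vm mm = β (t i₂) ∧
          (mm:ℝ) ≤ (P*(3*R+5*P+2)+1)*(6*P+6) ∧ ∀ j ≤ mm, vm j ∈ W := by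
      have h6P : (0:ℝ) ≤ 6*P+6 := by linarith
      rcases le_total i₁ i₂ with hc | hc
      · obtain ⟨mv, vv, hgc, h0, hm, hcnt, hvert⟩ := gridF (i₂ - i₁) i₁ (by omega)
        refine ⟨mv, vv, hgc, h0,
          by rw [hm, show i₁ + (i₂ - i₁) = i₂ from by omega], ?_, hvert⟩
        have hcast : ((i₂ - i₁ : ℕ):ℝ) ≤ P*(3*R+5*P+2) + 1 := by
          have h1 : ((i₂ - i₁:ℕ):ℝ) = (i₂:ℝ) - i₁ := by
            push_cast [Nat.cast_sub hc]
            ring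
          rw [h1]
          have h2 : (i₂:ℝ) - i₁ ≤ |(i₁:ℝ) - (i₂:ℝ)| := by
            rw [abs_sub_comm]
            exact le_abs_self _
          linarith [hii]
        calc (mv:ℝ) ≤ ((i₂-i₁:ℕ):ℝ)*(6*P+6) := hcnt
          _ ≤ (P*(3*R+5*P+2)+1)*(6*P+6) := mul_le_mul_of_nonneg_right hcast h6P
      · obtain ⟨mv, vv, hgc, h0, hm, hcnt, hvert⟩ := gridF (i₁ - i₂) i₂ (by omega)
        obtain ⟨hrgc, hr0, hrm, hrvert⟩ := gc_reverse hgc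
        refine ⟨mv, _, hrgc,
          by show vv (mv - 0) = β (t i₁)
             rw [Nat.sub_zero, hm, show i₂ + (i₁ - i₂) = i₁ from by omega],
          by show vv (mv - mv) = β (t i₂)
             rw [Nat.sub_self, h0], ?_, ?_⟩
        · have hcast : ((i₁ - i₂ : ℕ):ℝ) ≤ P*(3*R+5*P+2) + 1 := by
            have h1 : ((i₁ - i₂:ℕ):ℝ) = (i₁:ℝ) - i₂ := by
              push_cast [Nat.cast_sub hc]
              ring
            rw [h1]
            have h2 : (i₁:ℝ) - i₂ ≤ |(i₁:ℝ) - (i₂:ℝ)| := le_abs_self _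
            linarith [hii]
          calc (mv:ℝ) ≤ ((i₁-i₂:ℕ):ℝ)*(6*P+6) := hcnt
            _ ≤ (P*(3*R+5*P+2)+1)*(6*P+6) := mul_le_mul_of_nonneg_right hcast h6P
        · intro j hj
          obtain ⟨j', hj', he⟩ := hrvert j hj
          have he' : vv (mv - j) = vv j' := he
          rw [he']
          exact hvert j' hj'
    -- the two prefix chains and the reversed connector
    obtain ⟨hp1gc, hp10, hp1m, hp1vert⟩ := gc_reverse (gc_prefix (hσGC i₁) hj₁)
    have hp2gc : GC 𝓗 (vfun i₂) j₂ := gc_prefix (hσGC i₂) hj₂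
    obtain ⟨hr2gc, hr20, hr2m, hr2vert⟩ := gc_reverse hGCc₂
    -- assemble the polygon path Σ
    have hjoin1 : vc₁ mc₁ = (fun i => vfun i₁ (j₁ - i)) 0 := by
      show vc₁ mc₁ = vfun i₁ (j₁ - 0)
      rw [Nat.sub_zero, hc₁m, hv₁]
    obtain ⟨hA1gc, hA10, hA1m, hA1dec⟩ := gc_append hGCc₁ hp1gc hjoin1
    have hjoin2 : chApp vc₁ mc₁ (fun i => vfun i₁ (j₁ - i)) (mc₁ + j₁) = vm 0 := by
      rw [hA1m]
      show vfun i₁ (j₁ - j₁) = vm 0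
      rw [Nat.sub_self, hσ0 i₁, hm0]
    obtain ⟨hA2gc, hA20, hA2m, hA2dec⟩ := gc_append hA1gc hGCm hjoin2
    have hjoin3 : chApp (chApp vc₁ mc₁ (fun i => vfun i₁ (j₁ - i))) (mc₁ + j₁) vm
        (mc₁ + j₁ + mm) = vfun i₂ 0 := by
      rw [hA2m, hmm, hσ0 i₂]
    obtain ⟨hA3gc, hA30, hA3m, hA3dec⟩ := gc_append hA2gc hp2gc hjoin3
    have hjoin4 : chApp (chApp (chApp vc₁ mc₁ (fun i => vfun i₁ (j₁ - i))) (mc₁ + j₁) vm)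
        (mc₁ + j₁ + mm) (vfun i₂) (mc₁ + j₁ + mm + j₂) = (fun i => vc₂ (mc₂ - i)) 0 := by
      rw [hA3m]
      show vfun i₂ j₂ = vc₂ (mc₂ - 0)
      rw [Nat.sub_zero, hv₂, hc₂m]
    obtain ⟨hA4gc, hA40, hA4m, hA4dec⟩ := gc_append hA3gc hr2gc hjoin4
    set Mtot := mc₁ + j₁ + mm + j₂ + mc₂ with hMtot
    set vtot := chApp (chApp (chApp (chApp vc₁ mc₁ (fun i => vfun i₁ (j₁ - i))) (mc₁ + j₁) vm)
        (mc₁ + j₁ + mm) (vfun i₂)) (mc₁ + j₁ + mm + j₂) (fun i => vc₂ (mc₂ - i)) with hvtot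
    have hvtot0 : vtot 0 = γ u₁ := by
      rw [hA40, hA30, hA20, hA10, hc₁0]
    have hvtotm : vtot Mtot = γ u₂ := by
      rw [hA4m]
      show vc₂ (mc₂ - mc₂) = γ u₂
      rw [Nat.sub_self, hc₂0]
    set Wd : X → ℝ := fun z => W.inf' hWne (fun z' => elecDist 𝓗 z z') with hWdd
    have hGv : ∀ j ≤ Mtot, (vtot j ∈ W) ∨
        (elecDist 𝓗 (γ u₁) (vtot j) + Wd (vtot j) ≤ R + 1) ∨
        (elecDist 𝓗 (γ u₂) (vtot j) + Wd (vtot j) ≤ R + 1) := by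
      intro j hj
      rcases hA4dec j hj with ⟨j1, hj1, he⟩ | ⟨j1, hj1, he⟩
      · rcases hA3dec j1 hj1 with ⟨j2', hj2', he2⟩ | ⟨j2', hj2', he2⟩
        · rcases hA2dec j2' hj2' with ⟨j3, hj3, he3⟩ | ⟨j3, hj3, he3⟩
          · rcases hA1dec j3 hj3 with ⟨j4, hj4, he4⟩ | ⟨j4, hj4, he4⟩
            · -- connector 1 vertex
              right; left
              have heq : vtot j = vc₁ j4 := by rw [he, he2, he3, he4]
              rw [heq]
              have hv := hc₁vert j4 hj4
              have hWd : Wd (vc₁ j4) ≤ elecDist 𝓗 (vc₁ j4) w₁ := Finset.inf'_le _ hw₁W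
              linarith
            · -- reversed prefix of σ i₁ : in W
              left
              have heq : vtot j = vfun i₁ (j₁ - j4) := by
                rw [he, he2, he3]
                exact he4
              rw [heq]
              exact hWmem i₁ hi₁N _ (by omega)
          · -- middle vertex : in W
            left
            have heq : vtot j = vm j3 := by rw [he, he2, he3]
            rw [heq]
            exact hmvert j3 hj3
        · -- prefix of σ i₂ : in W
          left
          have heq : vtot j = vfun i₂ j2' := by rw [he, he2]
          rw [heq]
          exact hWmem i₂ hi₂N j2' (by omega)
      · -- reversed connector 2
        right; right
        have heq : vtot j = vc₂ (mc₂ - j1) := by rw [he]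
        rw [heq]
        have hv := hc₂vert (mc₂ - j1) (by omega)
        have hWd : Wd (vc₂ (mc₂ - j1)) ≤ elecDist 𝓗 (vc₂ (mc₂ - j1)) w₂ := Finset.inf'_le _ hw₂W
        linarith
    -- count of the polygon
    have hj₁R : (j₁:ℝ) ≤ 6*P+6 := by
      have h1 : (j₁:ℝ) ≤ (mfun i₁ : ℝ) := Nat.cast_le.mpr hj₁
      have h2 := hσcnt i₁
      linarith
    have hj₂R : (j₂:ℝ) ≤ 6*P+6 := by
      have h1 : (j₂:ℝ) ≤ (mfun i₂ : ℝ) := Nat.cast_le.mpr hj₂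
      have h2 := hσcnt i₂
      linarith
    have hMcnt : (Mtot:ℝ) ≤ cAA P * R + cBB P := by
      rw [hMtot]
      push_cast
      have expand : (P*(3*R+5*P+2)+1)*(6*P+6)
          = 18*(P^2*R)+18*(P*R)+30*P^3+42*P^2+18*P+6 := by ring
      have hmcnt' := hmcnt
      rw [expand] at hmcnt'
      have rhs : cAA P * R + cBB P
          = 20*(P^2*R)+40*(P*R)+20*R+40*P^3+120*P^2+120*P+40 := by
        unfold cAA cBB
        ring
      rw [rhs]
      have h1 : (0:ℝ) ≤ P^2*R := mul_nonneg (sq_nonneg P) hR0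
      have h2 : (0:ℝ) ≤ P*R := mul_nonneg hP0.le hR0
      have h4 : (0:ℝ) ≤ P^3 := pow_nonneg hP0.le 3
      have h5 : (0:ℝ) ≤ P^2 := sq_nonneg P
      linarith [hc₁cnt, hc₂cnt, hj₁R, hj₂R, hmcnt', hR0, hP0.le]
    -- degenerate case
    by_cases hM0 : Mtot = 0
    · have hmc₁0 : mc₁ = 0 := by omega
      have hgw : γ u₁ = w₁ := by
        rw [← hc₁0, ← hc₁m, hmc₁0]
      have h1 : R ≤ elecDist 𝓗 (γ u₀) w₁ := hρleW u₀ w₁ hw₁W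
      have h2 : elecDist 𝓗 (γ u₀) w₁ = elecDist 𝓗 (γ u₁) (γ u₀) := by
        rw [← hgw, elecDist_comm]
      have h3 : elecDist 𝓗 (γ u₁) (γ u₀) = R/2 := hu₁
      have h4 := cK1_nonneg (P := P) hδ hC
      linarith
    · -- main case : apply polygon thinness
      obtain ⟨hdist12, hSgeo⟩ := isGeodesicSeg_sub hγ hu₁L.1
        (le_trans hu₁mem.2 hu₂mem.1) hu₂L.2
      have hSgeo' : IsGeodesicSeg (fun τ => γ (u₁ + τ)) (vtot 0) (vtot Mtot) := by
        rw [hvtot0, hvtotm]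
        exact hSgeo
      have hwmem : w ∈ geodImage (fun τ => γ (u₁ + τ)) (vtot 0) (vtot Mtot) := by
        have hdd : dist (vtot 0) (vtot Mtot) = u₂ - u₁ := by
          rw [hvtot0, hvtotm]
          exact hdist12
        refine ⟨u₀ - u₁, ?_, ?_⟩
        · rw [hdd]
          exact ⟨by linarith [hu₁mem.2], by linarith [hu₂mem.1]⟩
        · show γ (u₁ + (u₀ - u₁)) = w
          rw [show u₁ + (u₀ - u₁) = u₀ by ring]
      obtain ⟨j, hjM, hwj⟩ := polygon hG hyp hQ hδ.le hC.le Mtot (by omega) vtot hA4gc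
        (fun τ => γ (u₁ + τ)) hSgeo' w hwmem
      have hh0 : (0:ℝ) ≤ δ*((Nat.clog 2 Mtot : ℝ)+1) + C + 1 := by positivity
      have hcase : R ≤ 4*(δ*((Nat.clog 2 Mtot : ℝ)+1) + C + 1) + 2 := by
        rcases hGv j hjM with hjW | hj2 | hj3
        · have h1 : R ≤ elecDist 𝓗 (γ u₀) (vtot j) := hρleW u₀ _ hjW
          have h2 : elecDist 𝓗 (γ u₀) (vtot j) = elecDist 𝓗 w (vtot j) := rfl
          linarith [hwj]
        · obtain ⟨z, hzW, hzeq⟩ := Finset.exists_mem_eq_inf' hWne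
            (fun z' => elecDist 𝓗 (vtot j) z')
          have hzeq' : Wd (vtot j) = elecDist 𝓗 (vtot j) z := hzeq
          have hR1 : R ≤ elecDist 𝓗 (γ u₀) z := hρleW u₀ z hzW
          have htr : elecDist 𝓗 (γ u₀) z ≤ elecDist 𝓗 (γ u₀) (vtot j) + elecDist 𝓗 (vtot j) z :=
            elecDist_triangle 𝓗 _ _ _
          have hwj' : elecDist 𝓗 (γ u₀) (vtot j) ≤ δ*((Nat.clog 2 Mtot : ℝ)+1) + C + 1 := hwj
          have t1 : elecDist 𝓗 (γ u₁) w ≤ elecDist 𝓗 (γ u₁) (vtot j) + elecDist 𝓗 (vtot j) w :=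
            elecDist_triangle 𝓗 _ _ _
          have t2 : elecDist 𝓗 (vtot j) w = elecDist 𝓗 (γ u₀) (vtot j) := elecDist_comm 𝓗 _ _
          have t3 : elecDist 𝓗 (γ u₁) w = R/2 := hu₁
          linarith
        · obtain ⟨z, hzW, hzeq⟩ := Finset.exists_mem_eq_inf' hWne
            (fun z' => elecDist 𝓗 (vtot j) z')
          have hzeq' : Wd (vtot j) = elecDist 𝓗 (vtot j) z := hzeq
          have hR1 : R ≤ elecDist 𝓗 (γ u₀) z := hρleW u₀ z hzW
          have htr : elecDist 𝓗 (γ u₀) z ≤ elecDist 𝓗 (γ u₀) (vtot j) + elecDist 𝓗 (vtot j) z :=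
            elecDist_triangle 𝓗 _ _ _
          have hwj' : elecDist 𝓗 (γ u₀) (vtot j) ≤ δ*((Nat.clog 2 Mtot : ℝ)+1) + C + 1 := hwj
          have t1 : elecDist 𝓗 (γ u₂) w ≤ elecDist 𝓗 (γ u₂) (vtot j) + elecDist 𝓗 (vtot j) w :=
            elecDist_triangle 𝓗 _ _ _
          have t2 : elecDist 𝓗 (vtot j) w = elecDist 𝓗 (γ u₀) (vtot j) := elecDist_comm 𝓗 _ _
          have t3 : elecDist 𝓗 (γ u₂) w = R/2 := hu₂
          linarith
      have hclog := clog_le_sqrt Mtot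
      have hsq : Real.sqrt Mtot ≤ Real.sqrt (cAA P * R + cBB P) := Real.sqrt_le_sqrt hMcnt
      have hclog2 : (Nat.clog 2 Mtot : ℝ) ≤ 3*Real.sqrt (cAA P * R + cBB P) + 1 := by
        linarith
      have hfin : R ≤ 12*δ*Real.sqrt (cAA P * R + cBB P) + (8*δ + 4*C + 6) := by
        nlinarith [mul_le_mul_of_nonneg_left hclog2 hδ.le, hcase]
      have hsolve := master_solve hR0 (by unfold cAA; positivity) (by unfold cBB; positivity)
        (by linarith) hδ.le hfin
      unfold cK1
      linarith
  refine ⟨N, t, hN1, htmem, ht0, htN, ?_⟩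
  intro u hu
  obtain ⟨z, hzW, hzeq⟩ := Finset.exists_mem_eq_inf' hWne (fun z => elecDist 𝓗 (γ u) z)
  have h1 : elecDist 𝓗 (γ u) z ≤ cK1 δ C P := by
    rw [← hzeq]
    exact le_trans (hρle u hu) hmain
  obtain ⟨i, hiN, hzi⟩ := hWgrid z hzW
  refine ⟨i, hiN, ?_⟩
  have h2 := elecDist_triangle 𝓗 (γ u) z (β (t i))
  linarith

end ElecTrack

set_option maxHeartbeats 1600000 in
/-- Electric quasigeodesics electrically track hyperbolic geodesics:
given δ, C, D > 0 and P ≥ 1 there exists K > 0 depending only on δ, C, D, P such that for any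
δ-hyperbolic geodesic space `X`, any collection `𝓗` of C-quasiconvex D-separated subsets,
any electric P-quasigeodesic `β` without backtracking from `x` to `y` and any `d`-geodesic
`γ` from `x` to `y`, the path `β` is contained in the K-neighborhood of `γ` with respect to
the electric pseudometric. -/
theorem electric_quasigeodesics_track (δ C D P : ℝ) (hδ : 0 < δ) (hC : 0 < C) (hD : 0 < D)
    (hP : 1 ≤ P) :
    ∃ K : ℝ, 0 < K ∧
      ∀ (X : Type) [MetricSpace X], GeodesicMS X → DeltaHyperbolic X δ →
        ∀ 𝓗 : Set (Set X), (∀ H ∈ 𝓗, QuasiconvexSubset C H) → SeparatedColl D 𝓗 →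
        ∀ (x y : X) (T : ℝ) (β γ : ℝ → X), 0 ≤ T → β 0 = x → β T = y →
          ElecQuasigeodesic 𝓗 P β T → NoBacktracking 𝓗 β T → IsGeodesicSeg γ x y →
          ∀ s ∈ Set.Icc (0 : ℝ) T, ∃ p ∈ geodImage γ x y, elecDist 𝓗 (β s) p ≤ K := by
  classical
  have hP0 : (0:ℝ) < P := lt_of_lt_of_le zero_lt_one hP
  set R₁ : ℝ := ElecTrack.cK1 δ C P + 2*P + 1 with hR₁def
  have hR₁0 : 0 < R₁ := by
    have := ElecTrack.cK1_nonneg (P := P) hδ hC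
    rw [hR₁def]
    linarith
  set K : ℝ := R₁ + P*(P*(2*R₁+P)) + P + 1 with hKdef
  have hK0 : 0 < K := by
    have h1 : 0 ≤ P*(P*(2*R₁+P)) := by positivity
    rw [hKdef]
    linarith
  refine ⟨K, hK0, ?_⟩
  intro X _ hG hyp 𝓗 hQ hsep x y T β γ hT hβ0 hβT hqg hnb hγgeo s hs
  obtain ⟨N, t, hN1, htmem, ht0, htN, hstepA⟩ :=
    ElecTrack.stepA hG hyp hQ hδ hC hP hT hβ0 hβT hqg hγgeo
  set L := dist x y with hL
  have hL0 : (0:ℝ) ≤ L := dist_nonneg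
  -- a helper converting the lower quasigeodesic bound
  have hlower : ∀ a ∈ Set.Icc (0:ℝ) T, ∀ b ∈ Set.Icc (0:ℝ) T, ∀ E : ℝ,
      elecDist 𝓗 (β a) (β b) ≤ E → |a - b| ≤ P*(E+P) := by
    intro a ha b hb E hE
    have h1 := (hqg a ha b hb).1
    have h2 : (1/P) * |a - b| ≤ E + P := by linarith
    have h3 := mul_le_mul_of_nonneg_left h2 hP0.le
    have h4 : P * ((1/P) * |a - b|) = |a - b| := by field_simp
    rw [h4] at h3
    exact h3
  set IA := (Finset.range (N+1)).filter (fun i => t i ≤ s) with hIA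
  set IB := (Finset.range (N+1)).filter (fun i => s ≤ t i) with hIB
  have hIAne : IA.Nonempty := by
    refine ⟨0, Finset.mem_filter.mpr ⟨Finset.mem_range.mpr (by omega), ?_⟩⟩
    rw [ht0]
    exact hs.1
  have hIBne : IB.Nonempty := by
    refine ⟨N, Finset.mem_filter.mpr ⟨Finset.mem_range.mpr (by omega), ?_⟩⟩
    rw [htN]
    exact hs.2
  set h₁ : ℝ → ℝ := fun u => IA.inf' hIAne (fun i => elecDist 𝓗 (γ u) (β (t i))) with hh₁
  set h₂ : ℝ → ℝ := fun u => IB.inf' hIBne (fun i => elecDist 𝓗 (γ u) (β (t i))) with hh₂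
  have hlip₁ : LipschitzOnWith 1 h₁ (Set.Icc 0 L) :=
    ElecTrack.inf'_elec_lipOn 𝓗 hγgeo hIAne (fun i => β (t i))
  have hlip₂ : LipschitzOnWith 1 h₂ (Set.Icc 0 L) :=
    ElecTrack.inf'_elec_lipOn 𝓗 hγgeo hIBne (fun i => β (t i))
  have hmin : ∀ u ∈ Set.Icc (0:ℝ) L, h₁ u ≤ R₁ ∨ h₂ u ≤ R₁ := by
    intro u hu
    obtain ⟨i, hiN, hi⟩ := hstepA u hu
    rcases le_total (t i) s with hc | hc
    · left
      refine le_trans (Finset.inf'_le _ ?_) hi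
      exact Finset.mem_filter.mpr ⟨Finset.mem_range.mpr (by omega), hc⟩
    · right
      refine le_trans (Finset.inf'_le _ ?_) hi
      exact Finset.mem_filter.mpr ⟨Finset.mem_range.mpr (by omega), hc⟩
  set SS : Set ℝ := Set.Icc 0 L ∩ h₁ ⁻¹' (Set.Iic R₁) with hSS
  have hSS0 : (0:ℝ) ∈ SS := by
    constructor
    · exact ⟨le_refl 0, hL0⟩
    · show h₁ 0 ≤ R₁
      have h1 : h₁ 0 ≤ elecDist 𝓗 (γ 0) (β (t 0)) := by
        apply Finset.inf'_le
        refine Finset.mem_filter.mpr ⟨Finset.mem_range.mpr (by omega), ?_⟩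
        rw [ht0]
        exact hs.1
      have h2 : elecDist 𝓗 (γ 0) (β (t 0)) = 0 := by
        rw [ht0, hγgeo.1, hβ0]
        exact ElecTrack.elecDist_self 𝓗 x
      linarith [hR₁0.le]
  have hSSne : SS.Nonempty := ⟨0, hSS0⟩
  have hSSbdd : BddAbove SS := ⟨L, fun u hu => hu.1.2⟩
  have hSSclosed : IsClosed SS :=
    hlip₁.continuousOn.preimage_isClosed_of_isClosed isClosed_Icc isClosed_Iic
  set u₀ := sSup SS with hu₀def
  have hu₀SS : u₀ ∈ SS := hSSclosed.csSup_mem hSSne hSSbdd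
  have hu₀mem : u₀ ∈ Set.Icc (0:ℝ) L := hu₀SS.1
  have hu₀h₁ : h₁ u₀ ≤ R₁ := hu₀SS.2
  have hpmem : γ u₀ ∈ geodImage γ x y := ⟨u₀, hu₀mem, rfl⟩
  -- extract a grid point on the left
  obtain ⟨i₀, hi₀IA, hi₀eq⟩ := Finset.exists_mem_eq_inf' hIAne
    (fun i => elecDist 𝓗 (γ u₀) (β (t i)))
  have hi₀le : elecDist 𝓗 (γ u₀) (β (t i₀)) ≤ R₁ := by
    rw [← hi₀eq]
    exact hu₀h₁
  have hti₀s : t i₀ ≤ s := (Finset.mem_filter.mp hi₀IA).2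
  by_cases hu₀L : u₀ = L
  · -- the supremum is the right endpoint
    have hyt : elecDist 𝓗 (β (t i₀)) (β T) ≤ R₁ := by
      have h1 : γ u₀ = y := by rw [hu₀L, hL, hγgeo.2.1]
      rw [← hβT] at h1
      rw [← h1, ElecTrack.elecDist_comm]
      exact hi₀le
    have hd1 : |t i₀ - T| ≤ P*(R₁+P) :=
      hlower (t i₀) (htmem i₀) T ⟨hT, le_refl T⟩ R₁ hyt
    have hd2 : |s - t i₀| ≤ P*(R₁+P) := by
      have e1 : s - t i₀ ≤ T - t i₀ := by linarith [hs.2]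
      have e2 : T - t i₀ ≤ |t i₀ - T| := by
        rw [abs_sub_comm]
        exact le_abs_self _
      rw [abs_of_nonneg (by linarith [hti₀s])]
      linarith
    have hup : elecDist 𝓗 (β s) (β (t i₀)) ≤ P*(P*(R₁+P)) + P := by
      have h1 := (hqg s hs (t i₀) (htmem i₀)).2
      have h2 : P * |s - t i₀| ≤ P * (P*(R₁+P)) :=
        mul_le_mul_of_nonneg_left hd2 hP0.le
      linarith
    refine ⟨γ u₀, hpmem, ?_⟩
    have htri := ElecTrack.elecDist_triangle 𝓗 (β s) (β (t i₀)) (γ u₀)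
    have hcm : elecDist 𝓗 (β (t i₀)) (γ u₀) = elecDist 𝓗 (γ u₀) (β (t i₀)) :=
      ElecTrack.elecDist_comm 𝓗 _ _
    have hfin : elecDist 𝓗 (β s) (γ u₀) ≤ P*(P*(R₁+P)) + P + R₁ := by
      rw [hcm] at htri
      linarith
    have hKge : P*(P*(R₁+P)) + P + R₁ ≤ K := by
      rw [hKdef]
      have h1 : P*(P*(R₁+P)) ≤ P*(P*(2*R₁+P)) := by
        apply mul_le_mul_of_nonneg_left _ hP0.le
        apply mul_le_mul_of_nonneg_left _ hP0.le
        linarith [hR₁0.le]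
      linarith
    linarith
  · -- interior supremum : both sides are close
    have hu₀lt : u₀ < L := lt_of_le_of_ne hu₀mem.2 hu₀L
    have hh₂u₀ : h₂ u₀ ≤ R₁ := by
      refine le_of_forall_pos_le_add ?_
      intro ε hε
      set u' := min L (u₀ + min ε (L - u₀)) with hu'def
      have hu'gt : u₀ < u' := by
        rw [hu'def]
        apply lt_min (by linarith)
        have : 0 < min ε (L - u₀) := lt_min hε (by linarith)
        linarith
      have hu'mem : u' ∈ Set.Icc (0:ℝ) L := by
        constructor
        · rw [hu'def]
          apply le_min hL0
          have : 0 ≤ min ε (L - u₀) := le_min hε.le (by linarith)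
          linarith [hu₀mem.1]
        · exact min_le_left _ _
      have hu'close : dist u' u₀ ≤ ε := by
        rw [Real.dist_eq, abs_of_nonneg (by linarith)]
        have h1 : u' ≤ u₀ + min ε (L - u₀) := min_le_right _ _
        have h2 : min ε (L - u₀) ≤ ε := min_le_left _ _
        linarith
      have hu'not : u' ∉ SS := by
        intro hmem
        have := le_csSup hSSbdd hmem
        rw [← hu₀def] at this
        linarith
      have hu'h₁ : ¬ (h₁ u' ≤ R₁) := by
        intro hcon
        exact hu'not ⟨hu'mem, hcon⟩
      have hu'h₂ : h₂ u' ≤ R₁ := by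
        rcases hmin u' hu'mem with hc | hc
        · exact absurd hc hu'h₁
        · exact hc
      have hdd := hlip₂.dist_le_mul u₀ hu₀mem u' hu'mem
      rw [NNReal.coe_one, one_mul] at hdd
      have h3 : h₂ u₀ - h₂ u' ≤ dist (h₂ u₀) (h₂ u') := by
        rw [Real.dist_eq]
        exact le_abs_self _
      have h4 : dist u₀ u' = dist u' u₀ := dist_comm _ _
      linarith
    obtain ⟨j₀, hj₀IB, hj₀eq⟩ := Finset.exists_mem_eq_inf' hIBne
      (fun i => elecDist 𝓗 (γ u₀) (β (t i)))
    have hj₀le : elecDist 𝓗 (γ u₀) (β (t j₀)) ≤ R₁ := by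
      rw [← hj₀eq]
      exact hh₂u₀
    have htj₀s : s ≤ t j₀ := (Finset.mem_filter.mp hj₀IB).2
    have hij : elecDist 𝓗 (β (t i₀)) (β (t j₀)) ≤ 2*R₁ := by
      have htri := ElecTrack.elecDist_triangle 𝓗 (β (t i₀)) (γ u₀) (β (t j₀))
      have hcm : elecDist 𝓗 (β (t i₀)) (γ u₀) = elecDist 𝓗 (γ u₀) (β (t i₀)) :=
        ElecTrack.elecDist_comm 𝓗 _ _
      rw [hcm] at htri
      linarith
    have hd1 : |t i₀ - t j₀| ≤ P*(2*R₁+P) :=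
      hlower (t i₀) (htmem i₀) (t j₀) (htmem j₀) (2*R₁) hij
    have hd2 : |s - t i₀| ≤ P*(2*R₁+P) := by
      have e1 : s - t i₀ ≤ t j₀ - t i₀ := by linarith
      have e2 : t j₀ - t i₀ ≤ |t i₀ - t j₀| := by
        rw [abs_sub_comm]
        exact le_abs_self _
      rw [abs_of_nonneg (by linarith)]
      linarith
    have hup : elecDist 𝓗 (β s) (β (t i₀)) ≤ P*(P*(2*R₁+P)) + P := by
      have h1 := (hqg s hs (t i₀) (htmem i₀)).2
      have h2 : P * |s - t i₀| ≤ P * (P*(2*R₁+P)) :=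
        mul_le_mul_of_nonneg_left hd2 hP0.le
      linarith
    refine ⟨γ u₀, hpmem, ?_⟩
    have htri := ElecTrack.elecDist_triangle 𝓗 (β s) (β (t i₀)) (γ u₀)
    have hcm : elecDist 𝓗 (β (t i₀)) (γ u₀) = elecDist 𝓗 (γ u₀) (β (t i₀)) :=
      ElecTrack.elecDist_comm 𝓗 _ _
    rw [hcm] at htri
    rw [hKdef]
    linarith
end

section
/- Let (Y₁,d₁) and (Y₂,d₂) be δ-hyperbolic geodesic metric spaces. Let μ₁ be a geodesic segment in Y₁ joining a and b, let p ∈ Y₁, and let q ∈ μ₁ be a nearest point of μ₁ to p, i.e. d₁(p,q) ≤ d₁(p,x) for all x ∈ μ₁. Let φ : Y₁ → Y₂ be a (K,ε)-quasi-isometric embedding, let μ₂ be a geodesic segment in Y₂ joining φ(a) and φ(b), and let r ∈ μ₂ be a nearest point of μ₂ to φ(p), i.e. d₂(φ(p),r) ≤ d₂(φ(p),x) for all x ∈ μ₂. Then d₂(r, φ(q)) ≤ C₄ for some constant C₄ depending only on K, ε and δ. -/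
open Set
open scoped Classical ENNReal

/-! A nearest point `q` of `μ₁` to `p` makes `[p, q] ∪ [q, x]` an almost geodesic for every
`x ∈ μ₁`, so `q` lies `9δ`-close to every geodesic `[p, x]`; in the same way `r` is close to
`[φ p, φ a]` and `[φ p, φ b]`. The Morse lemma carries these facts, and `q ∈ μ₁`, through `φ`:
`φ q` is close to all three sides of a geodesic triangle on `φ a`, `φ b`, `φ p`, and so is `r`.
Two points close to all three sides of a triangle are close to each other, since their distances
to a vertex are both fixed, up to an error, by a Gromov product.

The Morse lemma is proved for quasi-geodesic chains, as in Bridson–Haefliger III.H.1.7: by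
dyadic subdivision of the chain, the point of the geodesic farthest from the chain, at distance
`D`, is also within `O(δ log D)` of it, which bounds `D`. -/

open Metric

namespace IsGeodesicSeg

variable {X : Type} [MetricSpace X] {γ : ℝ → X} {x y : X}

lemma dist_eq (h : IsGeodesicSeg γ x y) {s t : ℝ} (hs : s ∈ Icc 0 (dist x y))
    (ht : t ∈ Icc 0 (dist x y)) : dist (γ s) (γ t) = |s - t| :=
  h.2.2 s hs t ht

lemma left_mem_geodImage (h : IsGeodesicSeg γ x y) : x ∈ geodImage γ x y :=
  ⟨0, ⟨le_rfl, dist_nonneg⟩, h.1⟩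

lemma right_mem_geodImage (h : IsGeodesicSeg γ x y) : y ∈ geodImage γ x y :=
  ⟨dist x y, ⟨dist_nonneg, le_rfl⟩, h.2.1⟩

lemma dist_left (h : IsGeodesicSeg γ x y) {t : ℝ} (ht : t ∈ Icc 0 (dist x y)) :
    dist x (γ t) = t := by
  rw [← h.1, h.dist_eq ⟨le_rfl, dist_nonneg⟩ ht, zero_sub, abs_neg, abs_of_nonneg ht.1]

lemma dist_right (h : IsGeodesicSeg γ x y) {t : ℝ} (ht : t ∈ Icc 0 (dist x y)) :
    dist (γ t) y = dist x y - t := by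
  conv_lhs => rw [← h.2.1]
  rw [h.dist_eq ht ⟨dist_nonneg, le_rfl⟩, abs_sub_comm, abs_of_nonneg (by linarith [ht.2])]

lemma dist_add_dist_eq (h : IsGeodesicSeg γ x y) {w : X} (hw : w ∈ geodImage γ x y) :
    dist x w + dist w y = dist x y := by
  obtain ⟨t, ht, rfl⟩ := hw
  rw [h.dist_left ht, h.dist_right ht]
  ring

lemma dist_eq_abs_sub_dist_right (h : IsGeodesicSeg γ x y) {w w' : X}
    (hw : w ∈ geodImage γ x y) (hw' : w' ∈ geodImage γ x y) :
    dist w w' = |dist w y - dist w' y| := by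
  obtain ⟨s, hs, rfl⟩ := hw
  obtain ⟨t, ht, rfl⟩ := hw'
  rw [h.dist_eq hs ht, h.dist_right hs, h.dist_right ht, abs_sub_comm]
  ring_nf

lemma continuousOn (h : IsGeodesicSeg γ x y) : ContinuousOn γ (Icc 0 (dist x y)) := by
  refine (LipschitzOnWith.of_dist_le_mul fun s hs t ht => ?_).continuousOn (K := 1)
  rw [h.dist_eq hs ht, Real.dist_eq, NNReal.coe_one, one_mul]

lemma isCompact_geodImage (h : IsGeodesicSeg γ x y) : IsCompact (geodImage γ x y) :=
  isCompact_Icc.image_of_continuousOn h.continuousOn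

lemma isPreconnected_geodImage (h : IsGeodesicSeg γ x y) : IsPreconnected (geodImage γ x y) :=
  isPreconnected_Icc.image _ h.continuousOn

lemma reverse (h : IsGeodesicSeg γ x y) :
    IsGeodesicSeg (fun t => γ (dist x y - t)) y x ∧
      geodImage (fun t => γ (dist x y - t)) y x = geodImage γ x y := by
  have hmem : ∀ t ∈ Icc 0 (dist x y), dist x y - t ∈ Icc 0 (dist x y) := fun t ht =>
    ⟨by linarith [ht.2], by linarith [ht.1]⟩
  refine ⟨⟨by simpa using h.2.1, by simpa [dist_comm] using h.1, fun s hs t ht => ?_⟩, ?_⟩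
  · rw [dist_comm] at hs ht
    rw [h.dist_eq (hmem s hs) (hmem t ht), abs_sub_comm]
    ring_nf
  · simp only [geodImage, dist_comm y x]
    ext w
    constructor
    · rintro ⟨t, ht, rfl⟩
      exact ⟨_, hmem t ht, rfl⟩
    · rintro ⟨t, ht, rfl⟩
      exact ⟨_, hmem t ht, by simp⟩

lemma restrict (h : IsGeodesicSeg γ x y) {u v : ℝ} (hu : 0 ≤ u) (huv : u ≤ v)
    (hv : v ≤ dist x y) :
    IsGeodesicSeg (fun t => γ (u + t)) (γ u) (γ v) ∧
      geodImage (fun t => γ (u + t)) (γ u) (γ v) = γ '' Icc u v := by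
  have hd : dist (γ u) (γ v) = v - u := by
    rw [h.dist_eq ⟨hu, huv.trans hv⟩ ⟨hu.trans huv, hv⟩, abs_sub_comm, abs_of_nonneg (by linarith)]
  refine ⟨⟨by simp, by rw [hd]; ring_nf, fun s hs t ht => ?_⟩, ?_⟩
  · rw [hd] at hs ht
    rw [h.dist_eq ⟨by linarith [hs.1], by linarith [hs.2]⟩ ⟨by linarith [ht.1], by linarith [ht.2]⟩]
    ring_nf
  · rw [geodImage, hd, ← image_image γ (u + ·), image_const_add_Icc]
    ring_nf

lemma exists_subsegment (h : IsGeodesicSeg γ x y) {u v : ℝ} (hu : u ∈ Icc 0 (dist x y))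
    (hv : v ∈ Icc 0 (dist x y)) :
    ∃ ρ : ℝ → X, IsGeodesicSeg ρ (γ u) (γ v) ∧ geodImage ρ (γ u) (γ v) = γ '' uIcc u v := by
  rcases le_total u v with huv | hvu
  · obtain ⟨hρ, himage⟩ := h.restrict hu.1 huv hv.2
    exact ⟨_, hρ, by rw [himage, uIcc_of_le huv]⟩
  · obtain ⟨hρ, himage⟩ := (h.restrict hv.1 hvu hu.2).1.reverse
    rw [(h.restrict hv.1 hvu hu.2).2, ← uIcc_of_ge hvu] at himage
    exact ⟨_, hρ, himage⟩

lemma dist_add_dist_le_of_dist_le (h : IsGeodesicSeg γ x y) {v w : X} (hw : w ∈ geodImage γ x y)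
    {D : ℝ} (hv : dist v w ≤ D) : dist x v + dist v y ≤ dist x y + 2 * D := by
  linarith [h.dist_add_dist_eq hw, dist_triangle x w v, dist_triangle v w y, dist_comm v w]

lemma exists_infDist_eq (h : IsGeodesicSeg γ x y) {S₁ S₂ : Set X} (hx : x ∈ S₁) (hy : y ∈ S₂) :
    ∃ u ∈ Icc 0 (dist x y), infDist (γ u) S₁ = infDist (γ u) S₂ := by
  have hf : ContinuousOn (fun t => infDist (γ t) S₁ - infDist (γ t) S₂) (Icc 0 (dist x y)) :=
    ((continuous_infDist_pt _).sub (continuous_infDist_pt _)).comp_continuousOn h.continuousOn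
  have h0 : infDist (γ 0) S₁ - infDist (γ 0) S₂ ≤ 0 := by
    rw [h.1, infDist_zero_of_mem hx]
    linarith [infDist_nonneg (x := x) (s := S₂)]
  have h1 : 0 ≤ infDist (γ (dist x y)) S₁ - infDist (γ (dist x y)) S₂ := by
    rw [h.2.1, infDist_zero_of_mem hy]
    linarith [infDist_nonneg (x := y) (s := S₁)]
  obtain ⟨u, hu, hfu⟩ := intermediate_value_Icc dist_nonneg hf ⟨h0, h1⟩
  exact ⟨u, hu, sub_eq_zero.mp hfu⟩

end IsGeodesicSeg

lemma IsCompact.exists_dist_le_of_infDist_le {X : Type} [MetricSpace X] {s : Set X}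
    (hs : IsCompact s) (hne : s.Nonempty) {x : X} {D : ℝ} (h : infDist x s ≤ D) :
    ∃ y ∈ s, dist x y ≤ D := by
  obtain ⟨y, hy, hxy⟩ := hs.exists_infDist_eq_dist hne x
  exact ⟨y, hy, hxy ▸ h⟩

namespace DeltaHyperbolic

variable {X : Type} [MetricSpace X] {δ : ℝ}

lemma nonneg (hyp : DeltaHyperbolic X δ) (geo : GeodesicMS X) (x : X) : 0 ≤ δ := by
  obtain ⟨γ, hγ⟩ := geo x x
  obtain ⟨_, -, hd⟩ := hyp x x x γ γ γ hγ hγ hγ x hγ.left_mem_geodImage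
  exact dist_nonneg.trans hd

/-- The points of the third side near the first, resp. second, side form two closed sets
covering a connected set. -/
lemma exists_near_both_sides (hyp : DeltaHyperbolic X δ) {x y z : X} {γ₁ γ₂ γ₃ : ℝ → X}
    (h₁ : IsGeodesicSeg γ₁ x y) (h₂ : IsGeodesicSeg γ₂ y z) (h₃ : IsGeodesicSeg γ₃ x z) :
    ∃ w ∈ geodImage γ₃ x z, ∃ w₁ ∈ geodImage γ₁ x y, ∃ w₂ ∈ geodImage γ₂ y z,
      dist w w₁ ≤ δ ∧ dist w w₂ ≤ δ := by
  have hδ : 0 ≤ δ := by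
    obtain ⟨_, -, hd⟩ := hyp x y z γ₁ γ₂ γ₃ h₁ h₂ h₃ x h₃.left_mem_geodImage
    exact dist_nonneg.trans hd
  have hcover : geodImage γ₃ x z ⊆
      {w | infDist w (geodImage γ₁ x y) ≤ δ} ∪ {w | infDist w (geodImage γ₂ y z) ≤ δ} := by
    intro w hw
    obtain ⟨w', hw' | hw', hd⟩ := hyp x y z γ₁ γ₂ γ₃ h₁ h₂ h₃ w hw
    · exact Or.inl ((infDist_le_dist_of_mem hw').trans hd)
    · exact Or.inr ((infDist_le_dist_of_mem hw').trans hd)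
  have hx : infDist x (geodImage γ₁ x y) ≤ δ := by
    rw [infDist_zero_of_mem h₁.left_mem_geodImage]; exact hδ
  have hz : infDist z (geodImage γ₂ y z) ≤ δ := by
    rw [infDist_zero_of_mem h₂.right_mem_geodImage]; exact hδ
  obtain ⟨w, hw, hw₁, hw₂⟩ := isPreconnected_closed_iff.mp h₃.isPreconnected_geodImage _ _
    (isClosed_le (continuous_infDist_pt _) continuous_const)
    (isClosed_le (continuous_infDist_pt _) continuous_const) hcover
    ⟨x, h₃.left_mem_geodImage, hx⟩ ⟨z, h₃.right_mem_geodImage, hz⟩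
  obtain ⟨w₁, hw₁, hd₁⟩ :=
    h₁.isCompact_geodImage.exists_dist_le_of_infDist_le ⟨x, h₁.left_mem_geodImage⟩ hw₁
  obtain ⟨w₂, hw₂, hd₂⟩ :=
    h₂.isCompact_geodImage.exists_dist_le_of_infDist_le ⟨y, h₂.left_mem_geodImage⟩ hw₂
  exact ⟨w, hw, w₁, hw₁, w₂, hw₂, hd₁, hd₂⟩

lemma exists_near_quadrilateral (hyp : DeltaHyperbolic X δ) (geo : GeodesicMS X)
    {x y z t : X} {γ₁ γ₂ γ₃ γ₄ : ℝ → X} (h₁ : IsGeodesicSeg γ₁ x y) (h₂ : IsGeodesicSeg γ₂ y z)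
    (h₃ : IsGeodesicSeg γ₃ z t) (h₄ : IsGeodesicSeg γ₄ x t) {w : X} (hw : w ∈ geodImage γ₄ x t) :
    ∃ w' ∈ geodImage γ₁ x y ∪ geodImage γ₂ y z ∪ geodImage γ₃ z t, dist w w' ≤ 2 * δ := by
  have hδ := hyp.nonneg geo x
  obtain ⟨σ, hσ⟩ := geo x z
  obtain ⟨w', hw' | hw', hd⟩ := hyp x z t σ γ₃ γ₄ hσ h₃ h₄ w hw
  · obtain ⟨w'', hw'', hd'⟩ := hyp x y z γ₁ γ₂ σ h₁ h₂ hσ w' hw'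
    exact ⟨w'', Or.inl hw'', by linarith [dist_triangle w w' w'']⟩
  · exact ⟨w', Or.inr hw', by linarith⟩

lemma exists_near_of_dist_add_dist_le (hyp : DeltaHyperbolic X δ) (geo : GeodesicMS X)
    {x y v : X} {σ : ℝ → X} (hσ : IsGeodesicSeg σ x y) {κ : ℝ}
    (h : dist x v + dist v y ≤ dist x y + κ) :
    ∃ w ∈ geodImage σ x y, dist v w ≤ κ + 3 * δ := by
  obtain ⟨σ₁, hσ₁⟩ := geo x v
  obtain ⟨σ₂, hσ₂⟩ := geo v y
  obtain ⟨w, hw, w₁, hw₁, w₂, hw₂, hd₁, hd₂⟩ := hyp.exists_near_both_sides hσ₁ hσ₂ hσ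
  have e := hσ.dist_add_dist_eq hw
  have e₁ := hσ₁.dist_add_dist_eq hw₁
  have e₂ := hσ₂.dist_add_dist_eq hw₂
  refine ⟨w, hw, ?_⟩
  linarith [dist_triangle x w₁ w, dist_triangle w w₂ y, dist_triangle v w₁ w, dist_comm v w₁,
    dist_comm w₁ w, dist_nonneg (x := v) (y := w₂)]

lemma dist_add_dist_le_of_isNearest (hyp : DeltaHyperbolic X δ) (geo : GeodesicMS X)
    {a b p q x : X} {γ : ℝ → X} (hγ : IsGeodesicSeg γ a b) (hq : q ∈ geodImage γ a b)
    (hnear : ∀ x ∈ geodImage γ a b, dist p q ≤ dist p x) (hx : x ∈ geodImage γ a b) :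
    dist p q + dist q x ≤ dist p x + 6 * δ := by
  obtain ⟨u, hu, rfl⟩ := hq
  obtain ⟨v, hv, rfl⟩ := hx
  obtain ⟨ρ, hρ, hργ⟩ := hγ.exists_subsegment hu hv
  obtain ⟨τ, hτ⟩ := geo p (γ u)
  obtain ⟨σ, hσ⟩ := geo p (γ v)
  obtain ⟨w, hw, w₁, hw₁, w₂, hw₂, hd₁, hd₂⟩ := hyp.exists_near_both_sides hτ hρ hσ
  have hw₂γ : w₂ ∈ geodImage γ a b := by
    rw [hργ] at hw₂
    exact image_mono (uIcc_subset_Icc hu hv) hw₂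
  have e := hσ.dist_add_dist_eq hw
  have e₁ := hτ.dist_add_dist_eq hw₁
  have e₂ := hρ.dist_add_dist_eq hw₂
  linarith [hnear w₂ hw₂γ, dist_triangle p w w₂, dist_triangle p w₁ w, dist_comm w₁ w,
    dist_triangle4 (γ u) w₁ w w₂, dist_comm (γ u) w₁, dist_triangle w₂ w (γ v), dist_comm w₂ w]

lemma exists_near_of_isNearest (hyp : DeltaHyperbolic X δ) (geo : GeodesicMS X)
    {a b p q x : X} {γ σ : ℝ → X} (hγ : IsGeodesicSeg γ a b) (hq : q ∈ geodImage γ a b)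
    (hnear : ∀ x ∈ geodImage γ a b, dist p q ≤ dist p x) (hx : x ∈ geodImage γ a b)
    (hσ : IsGeodesicSeg σ p x) :
    ∃ w ∈ geodImage σ p x, dist q w ≤ 9 * δ := by
  obtain ⟨w, hw, hd⟩ := hyp.exists_near_of_dist_add_dist_le geo hσ
    (hyp.dist_add_dist_le_of_isNearest geo hγ hq hnear hx)
  exact ⟨w, hw, by linarith⟩

end DeltaHyperbolic

section Tripod

variable {X : Type} [MetricSpace X] {A B P : X} {γ₁ γ₂ γ₃ : ℝ → X} {D : ℝ}

/-- For `v` near all three sides of the triangle, `dist A v` is determined up to `O(D)` by the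
Gromov product `(B|P)_A`. -/
lemma two_mul_dist_bounds_of_near_sides (h₁ : IsGeodesicSeg γ₁ A B)
    (h₂ : IsGeodesicSeg γ₂ P A) (h₃ : IsGeodesicSeg γ₃ P B) {v : X}
    (hv₁ : ∃ w ∈ geodImage γ₁ A B, dist v w ≤ D) (hv₂ : ∃ w ∈ geodImage γ₂ P A, dist v w ≤ D)
    (hv₃ : ∃ w ∈ geodImage γ₃ P B, dist v w ≤ D) :
    dist P A + dist A B - dist P B - 2 * D ≤ 2 * dist A v ∧
      2 * dist A v ≤ dist P A + dist A B - dist P B + 4 * D := by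
  obtain ⟨w₁, hw₁, hd₁⟩ := hv₁
  obtain ⟨w₂, hw₂, hd₂⟩ := hv₂
  obtain ⟨w₃, hw₃, hd₃⟩ := hv₃
  have t₁ := h₁.dist_add_dist_le_of_dist_le hw₁ hd₁
  have t₂ := h₂.dist_add_dist_le_of_dist_le hw₂ hd₂
  have t₃ := h₃.dist_add_dist_le_of_dist_le hw₃ hd₃
  constructor <;> linarith [dist_triangle A v B, dist_triangle P v A, dist_triangle P v B,
    dist_comm A v]

lemma dist_le_of_near_sides (h₁ : IsGeodesicSeg γ₁ A B) (h₂ : IsGeodesicSeg γ₂ P A)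
    (h₃ : IsGeodesicSeg γ₃ P B) {u v : X}
    (hu₁ : ∃ w ∈ geodImage γ₁ A B, dist u w ≤ D) (hu₂ : ∃ w ∈ geodImage γ₂ P A, dist u w ≤ D)
    (hu₃ : ∃ w ∈ geodImage γ₃ P B, dist u w ≤ D)
    (hv₁ : ∃ w ∈ geodImage γ₁ A B, dist v w ≤ D) (hv₂ : ∃ w ∈ geodImage γ₂ P A, dist v w ≤ D)
    (hv₃ : ∃ w ∈ geodImage γ₃ P B, dist v w ≤ D) :
    dist u v ≤ 7 * D := by
  have hu := two_mul_dist_bounds_of_near_sides h₁ h₂ h₃ hu₁ hu₂ hu₃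
  have hv := two_mul_dist_bounds_of_near_sides h₁ h₂ h₃ hv₁ hv₂ hv₃
  obtain ⟨wu, hwu, hdu⟩ := hu₂
  obtain ⟨wv, hwv, hdv⟩ := hv₂
  have hw : dist wu wv ≤ 5 * D := by
    rw [h₂.dist_eq_abs_sub_dist_right hwu hwv, abs_le]
    constructor <;> linarith [dist_triangle wu u A, dist_triangle wv v A, dist_triangle u wu A,
      dist_triangle v wv A, dist_comm A u, dist_comm A v, dist_comm wu u, dist_comm wv v]
  linarith [dist_triangle4 u wu wv v, dist_comm v wv]

end Tripod

lemma exists_two_pow_ge_of_nonneg {R : ℝ} (hR : 0 ≤ R) :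
    ∃ k : ℕ, R ≤ 2 ^ k ∧ (k : ℝ) * (k - 1) ≤ 4 * R + 2 := by
  rcases lt_or_ge R 1 with hR1 | hR1
  · exact ⟨0, by simpa using hR1.le, by norm_num; linarith⟩
  obtain ⟨k, hk, hk'⟩ := exists_nat_pow_near hR1 one_lt_two
  refine ⟨k + 1, hk'.le, ?_⟩
  have hchoose : ((k + 1).choose 2 : ℝ) ≤ 2 ^ (k + 1) := by
    exact_mod_cast Nat.choose_le_two_pow (k + 1) 2
  rw [Nat.cast_choose_two, pow_succ] at hchoose
  push_cast at hchoose ⊢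
  linarith

-- solves `D ≤ 4 δ + s / 2 + δ k`, `k (k - 1) ≤ 16 Λ D + 4 m + 2` for `D`
noncomputable def geodesicNearChainBound (δ Λ m s : ℝ) : ℝ :=
  4 * δ + s / 2 + δ * (80 * Λ * δ + 8 * Λ * s + 4 * m + 3)

noncomputable def chainNearGeodesicBound (δ Λ m s : ℝ) : ℝ :=
  s * (2 * Λ * geodesicNearChainBound δ Λ m s + m) + geodesicNearChainBound δ Λ m s

structure IsQuasiGeodesicChain {X : Type} [MetricSpace X] (Λ m s : ℝ) (c : ℕ → X) (n : ℕ) :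
    Prop where
  dist_succ_le : ∀ i, dist (c i) (c (i + 1)) ≤ s
  abs_sub_le : ∀ i ≤ n, ∀ j ≤ n, |(i : ℝ) - j| ≤ Λ * dist (c i) (c j) + m

section Chain

variable {X : Type} [MetricSpace X] {δ Λ m s : ℝ} {c : ℕ → X} {n : ℕ}

lemma exists_dist_le_of_infDist_image_le {I : Set ℕ} (hI : I.Finite) (hne : I.Nonempty) {x : X}
    {D : ℝ} (h : infDist x (c '' I) ≤ D) : ∃ i ∈ I, dist x (c i) ≤ D := by
  obtain ⟨_, ⟨i, hi, rfl⟩, hd⟩ :=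
    (hI.image c).isCompact.exists_dist_le_of_infDist_le (hne.image c) h
  exact ⟨i, hi, hd⟩

lemma dist_le_mul_of_dist_succ_le (hstep : ∀ i, dist (c i) (c (i + 1)) ≤ s) {i j : ℕ}
    (hij : i ≤ j) : dist (c i) (c j) ≤ s * (j - i) := by
  have := dist_le_Ico_sum_of_dist_le (f := c) (d := fun _ => s) hij fun {_} _ _ => hstep _
  rwa [Finset.sum_const, Nat.card_Ico, nsmul_eq_mul, Nat.cast_sub hij, mul_comm] at this

lemma exists_near_chain_of_le_two_pow (hyp : DeltaHyperbolic X δ) (geo : GeodesicMS X)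
    (hstep : ∀ i, dist (c i) (c (i + 1)) ≤ s) (k : ℕ) :
    ∀ i j, i ≤ j + 2 ^ k → j ≤ i + 2 ^ k → ∀ γ : ℝ → X, IsGeodesicSeg γ (c i) (c j) →
      ∀ w ∈ geodImage γ (c i) (c j), ∃ l ≤ max i j, dist w (c l) ≤ δ * k + s / 2 := by
  induction k with
  | zero =>
    intro i j hij hji γ hγ w hw
    have hs : dist (c i) (c j) ≤ s := by
      rcases (by omega : j = i ∨ j = i + 1 ∨ i = j + 1) with h | h | h
      · rw [h, dist_self]; exact dist_nonneg.trans (hstep i)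
      · rw [h]; exact hstep i
      · rw [h, dist_comm]; exact hstep j
    have hsum := hγ.dist_add_dist_eq hw
    rcases le_total (dist (c i) w) (s / 2) with h | h
    · exact ⟨i, le_max_left i j, by rw [dist_comm]; simpa using h⟩
    · exact ⟨j, le_max_right i j, by simp only [CharP.cast_eq_zero, mul_zero, zero_add]; linarith⟩
  | succ k ih =>
    intro i j hij hji γ hγ w hw
    obtain ⟨σ₁, hσ₁⟩ := geo (c i) (c ((i + j) / 2))
    obtain ⟨σ₂, hσ₂⟩ := geo (c ((i + j) / 2)) (c j)
    obtain ⟨w', hw', hd⟩ := hyp _ _ _ σ₁ σ₂ γ hσ₁ hσ₂ hγ w hw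
    have hpow : 2 ^ (k + 1) = 2 * 2 ^ k := by ring
    obtain ⟨l, hl, hdl⟩ : ∃ l ≤ max i j, dist w' (c l) ≤ δ * k + s / 2 := by
      rcases hw' with hw' | hw'
      · obtain ⟨l, hl, hdl⟩ := ih i ((i + j) / 2) (by omega) (by omega) σ₁ hσ₁ w' hw'
        exact ⟨l, by omega, hdl⟩
      · obtain ⟨l, hl, hdl⟩ := ih ((i + j) / 2) j (by omega) (by omega) σ₂ hσ₂ w' hw'
        exact ⟨l, by omega, hdl⟩
    refine ⟨l, hl, ?_⟩
    push_cast
    linarith [dist_triangle w w' (c l)]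

/-- `w₀` is `2 δ`-close to the quadrilateral `y, c ty, c tz, z`. Near the middle side,
bisection of the chain applies; near the other two sides, `D ≤ 4 δ`. -/
lemma le_of_farthest_from_chain (hyp : DeltaHyperbolic X δ) (geo : GeodesicMS X)
    (hc : IsQuasiGeodesicChain Λ m s c n) (hΛ : 0 ≤ Λ)
    {y z w₀ : X} {ρ : ℝ → X} (hρ : IsGeodesicSeg ρ y z) (hw₀ : w₀ ∈ geodImage ρ y z) {D : ℝ}
    (hy : dist w₀ y = D) (hz : dist w₀ z = D) {ty tz : ℕ} (hty : ty ≤ n) (htz : tz ≤ n)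
    (hdy : dist y (c ty) ≤ D) (hdz : dist z (c tz) ≤ D) (hD : ∀ l ≤ n, D ≤ dist w₀ (c l))
    {k : ℕ} (hk : Λ * (4 * D) + m ≤ 2 ^ k) :
    D ≤ 4 * δ + s / 2 + δ * k := by
  have hδ := hyp.nonneg geo y
  have hs : 0 ≤ s := dist_nonneg.trans (hc.dist_succ_le 0)
  have hδk : 0 ≤ δ * k := by positivity
  obtain ⟨σ₁, hσ₁⟩ := geo y (c ty)
  obtain ⟨σ₂, hσ₂⟩ := geo (c ty) (c tz)
  obtain ⟨σ₃, hσ₃⟩ := geo (c tz) z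
  obtain ⟨w, (hw | hw) | hw, hdw⟩ := hyp.exists_near_quadrilateral geo hσ₁ hσ₂ hσ₃ hρ hw₀
  · linarith [hσ₁.dist_add_dist_le_of_dist_le hw hdw, hD ty hty, dist_comm w₀ y]
  · have hcc : dist (c ty) (c tz) ≤ 4 * D := by
      linarith [dist_triangle4 (c ty) y w₀ (c tz), dist_comm (c ty) y, dist_comm y w₀,
        dist_triangle w₀ z (c tz)]
    have hgap := abs_le.mp ((hc.abs_sub_le ty hty tz htz).trans
      (by nlinarith [mul_le_mul_of_nonneg_left hcc hΛ] : Λ * dist (c ty) (c tz) + m ≤ 2 ^ k))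
    have h₁ : (ty : ℝ) ≤ tz + 2 ^ k := by linarith [hgap.2]
    have h₂ : (tz : ℝ) ≤ ty + 2 ^ k := by linarith [hgap.1]
    obtain ⟨l, hl, hdl⟩ := exists_near_chain_of_le_two_pow hyp geo hc.dist_succ_le k ty tz
      (by exact_mod_cast h₁) (by exact_mod_cast h₂) σ₂ hσ₂ w hw
    linarith [hD l (hl.trans (max_le hty htz)), dist_triangle w₀ w (c l)]
  · linarith [hσ₃.dist_add_dist_le_of_dist_le hw hdw, hD tz htz, dist_comm (c tz) w₀,
      dist_comm (c tz) z]

/-- Compare a point `γ u₀` of `γ` farthest from the chain, at distance `D`, with the points of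
`γ` at distance `D` on either side of it. -/
lemma exists_near_chain (hyp : DeltaHyperbolic X δ) (geo : GeodesicMS X)
    (hc : IsQuasiGeodesicChain Λ m s c n) (hΛ : 0 ≤ Λ)
    {γ : ℝ → X} (hγ : IsGeodesicSeg γ (c 0) (c n)) {w : X} (hw : w ∈ geodImage γ (c 0) (c n)) :
    ∃ l ≤ n, dist w (c l) ≤ geodesicNearChainBound δ Λ m s := by
  have hδ := hyp.nonneg geo (c 0)
  have hs : 0 ≤ s := dist_nonneg.trans (hc.dist_succ_le 0)
  have hm : 0 ≤ m := by simpa using hc.abs_sub_le 0 (Nat.zero_le n) 0 (Nat.zero_le n)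
  obtain ⟨u₀, hu₀, hmax⟩ := isCompact_Icc.exists_isMaxOn (nonempty_Icc.mpr dist_nonneg)
    ((continuous_infDist_pt (c '' Iic n)).comp_continuousOn hγ.continuousOn)
  set D := infDist (γ u₀) (c '' Iic n)
  have hfar : ∀ t ∈ Icc 0 (dist (c 0) (c n)), ∃ l ≤ n, dist (γ t) (c l) ≤ D := fun t ht =>
    exists_dist_le_of_infDist_image_le (finite_Iic n) ⟨0, Nat.zero_le n⟩ (isMaxOn_iff.mp hmax t ht)
  have hD : ∀ l ≤ n, D ≤ dist (γ u₀) (c l) := fun l hl =>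
    infDist_le_dist_of_mem (mem_image_of_mem c hl)
  have hD0 : 0 ≤ D := infDist_nonneg
  have hleft := hD 0 (Nat.zero_le n)
  have hright := hD n le_rfl
  rw [dist_comm, hγ.dist_left hu₀] at hleft
  rw [hγ.dist_right hu₀] at hright
  have hy : u₀ - D ∈ Icc 0 (dist (c 0) (c n)) := ⟨by linarith, by linarith [hu₀.2]⟩
  have hz : u₀ + D ∈ Icc 0 (dist (c 0) (c n)) := ⟨by linarith, by linarith⟩
  obtain ⟨ty, hty, hdy⟩ := hfar _ hy
  obtain ⟨tz, htz, hdz⟩ := hfar _ hz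
  obtain ⟨hρ, hρim⟩ := hγ.restrict hy.1 (by linarith) hz.2
  obtain ⟨k, hk, hk'⟩ := exists_two_pow_ge_of_nonneg (R := Λ * (4 * D) + m) (by positivity)
  have hDk := le_of_farthest_from_chain hyp geo hc hΛ hρ
    (by rw [hρim]; exact mem_image_of_mem γ ⟨by linarith, by linarith⟩)
    (by rw [hγ.dist_eq hu₀ hy]; simp [abs_of_nonneg hD0])
    (by rw [hγ.dist_eq hu₀ hz]; simp [abs_of_nonneg hD0]) hty htz hdy hdz hD hk
  have hk'' : (k : ℝ) ≤ 80 * Λ * δ + 8 * Λ * s + 4 * m + 3 := by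
    nlinarith [mul_le_mul_of_nonneg_left hDk hΛ, mul_nonneg hΛ hδ, mul_nonneg hΛ hs]
  obtain ⟨t, ht, rfl⟩ := hw
  obtain ⟨l, hl, hdl⟩ := hfar t ht
  refine ⟨l, hl, hdl.trans ?_⟩
  unfold geodesicNearChainBound
  nlinarith [mul_le_mul_of_nonneg_left hk'' hδ]

/-- Some point of `γ` is equally close to the chain before and after `i`, hence close to both;
the lower bound then keeps the two nearby chain indices, and so `i`, together. -/
lemma exists_near_geodesic_of_chain (hyp : DeltaHyperbolic X δ) (geo : GeodesicMS X)
    (hc : IsQuasiGeodesicChain Λ m s c n) (hΛ : 0 ≤ Λ)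
    {γ : ℝ → X} (hγ : IsGeodesicSeg γ (c 0) (c n)) {i : ℕ} (hi : i ≤ n) :
    ∃ w ∈ geodImage γ (c 0) (c n), dist (c i) w ≤ chainNearGeodesicBound δ Λ m s := by
  set D₀ := geodesicNearChainBound δ Λ m s
  have hs : 0 ≤ s := dist_nonneg.trans (hc.dist_succ_le 0)
  obtain ⟨u, hu, hfu⟩ := hγ.exists_infDist_eq (S₁ := c '' Iic i) (S₂ := c '' Icc i n)
    (mem_image_of_mem c (show 0 ∈ Iic i from Nat.zero_le i))
    (mem_image_of_mem c (show n ∈ Icc i n from ⟨hi, le_rfl⟩))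
  obtain ⟨l, hl, hdl⟩ := exists_near_chain hyp geo hc hΛ hγ (mem_image_of_mem γ hu)
  have hboth : infDist (γ u) (c '' Iic i) ≤ D₀ ∧ infDist (γ u) (c '' Icc i n) ≤ D₀ := by
    rcases le_total l i with h | h
    · have := (infDist_le_dist_of_mem (mem_image_of_mem c (show l ∈ Iic i from h))).trans hdl
      exact ⟨this, hfu ▸ this⟩
    · have := (infDist_le_dist_of_mem (mem_image_of_mem c (show l ∈ Icc i n from ⟨h, hl⟩))).trans hdl
      exact ⟨hfu ▸ this, this⟩
  obtain ⟨j₁, hj₁ : j₁ ≤ i, hd₁⟩ :=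
    exists_dist_le_of_infDist_image_le (finite_Iic i) nonempty_Iic hboth.1
  obtain ⟨j₂, hj₂, hd₂⟩ :=
    exists_dist_le_of_infDist_image_le (finite_Icc i n) (nonempty_Icc.mpr hi) hboth.2
  have hgap : (j₂ : ℝ) - j₁ ≤ Λ * (2 * D₀) + m := by
    have hcc : dist (c j₂) (c j₁) ≤ 2 * D₀ := by
      linarith [dist_triangle (c j₂) (γ u) (c j₁), dist_comm (c j₂) (γ u)]
    linarith [le_abs_self ((j₂ : ℝ) - j₁), hc.abs_sub_le j₂ hj₂.2 j₁ (hj₁.trans hi),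
      mul_le_mul_of_nonneg_left hcc hΛ]
  have hij : (i : ℝ) - j₁ ≤ j₂ - j₁ := by linarith [show (i : ℝ) ≤ j₂ by exact_mod_cast hj₂.1]
  refine ⟨γ u, mem_image_of_mem γ hu, ?_⟩
  calc dist (c i) (γ u) ≤ dist (c j₁) (c i) + dist (γ u) (c j₁) := by
        rw [dist_comm (c j₁), dist_comm (γ u)]; exact dist_triangle _ _ _
    _ ≤ s * (i - j₁) + D₀ := add_le_add (dist_le_mul_of_dist_succ_le hc.dist_succ_le hj₁) hd₁
    _ ≤ chainNearGeodesicBound δ Λ m s := by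
      unfold chainNearGeodesicBound
      nlinarith [mul_le_mul_of_nonneg_left (hij.trans hgap) hs]

end Chain

def IsQIEmbedding {X Y : Type} [MetricSpace X] [MetricSpace Y] (K ε : ℝ) (φ : X → Y) : Prop :=
  ∀ u v : X, (1 / K) * dist u v - ε ≤ dist (φ u) (φ v) ∧ dist (φ u) (φ v) ≤ K * dist u v + ε

noncomputable def qiMorseBound (δ K ε : ℝ) : ℝ :=
  chainNearGeodesicBound δ K (K * ε + 1) (K + ε) + K + ε

namespace IsQIEmbedding

variable {X Y : Type} [MetricSpace X] [MetricSpace Y] {K ε : ℝ} {φ : X → Y}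

lemma nonneg (hφ : IsQIEmbedding K ε φ) (x : X) : 0 ≤ ε := by
  simpa using (hφ x x).2

lemma dist_le (hφ : IsQIEmbedding K ε φ) (hK : 0 < K) (u v : X) :
    dist u v ≤ K * dist (φ u) (φ v) + K * ε := by
  have h := mul_le_mul_of_nonneg_left
    (show (1 / K) * dist u v ≤ dist (φ u) (φ v) + ε by linarith [(hφ u v).1]) hK.le
  rwa [← mul_assoc, mul_one_div_cancel hK.ne', one_mul, mul_add] at h

lemma isQuasiGeodesicChain_sample (hφ : IsQIEmbedding K ε φ) (hK : 0 < K) {u v : X}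
    {σ : ℝ → X} (hσ : IsGeodesicSeg σ u v) :
    IsQuasiGeodesicChain K (K * ε + 1) (K + ε) (fun i : ℕ => φ (σ (min (i : ℝ) (dist u v))))
      ⌈dist u v⌉₊ := by
  set t : ℕ → ℝ := fun i => min (i : ℝ) (dist u v)
  have ht : ∀ i, t i ∈ Icc 0 (dist u v) := fun i =>
    ⟨le_min i.cast_nonneg dist_nonneg, min_le_right _ _⟩
  constructor
  · intro i
    have h1 : |t i - t (i + 1)| ≤ 1 := by
      simpa [t] using abs_min_sub_min_le_max (i : ℝ) (dist u v) (i + 1 : ℕ) (dist u v)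
    have := (hφ (σ (t i)) (σ (t (i + 1)))).2
    rw [hσ.dist_eq (ht i) (ht (i + 1))] at this
    nlinarith
  · intro i hi j hj
    have hfrac : ∀ l ≤ ⌈dist u v⌉₊, 0 ≤ (l : ℝ) - t l ∧ (l : ℝ) - t l < 1 := fun l hl =>
      ⟨by linarith [min_le_left (l : ℝ) (dist u v)], by
        have : (l : ℝ) < dist u v + 1 :=
          (Nat.cast_le.mpr hl).trans_lt (Nat.ceil_lt_add_one dist_nonneg)
        rcases min_choice (l : ℝ) (dist u v) with h | h <;> simp only [t, h] <;> linarith⟩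
    have h1 := abs_sub_lt_of_nonneg_of_lt (hfrac i hi).1 (hfrac i hi).2 (hfrac j hj).1
      (hfrac j hj).2
    have h2 := hφ.dist_le hK (σ (t i)) (σ (t j))
    rw [hσ.dist_eq (ht i) (ht j)] at h2
    calc |(i : ℝ) - j| = |(t i - t j) + ((i - t i) - (j - t j))| := by ring_nf
      _ ≤ |t i - t j| + |(i - t i) - (j - t j)| := abs_add_le _ _
      _ ≤ K * dist (φ (σ (t i))) (φ (σ (t j))) + (K * ε + 1) := by linarith

/-- The Morse lemma. -/
lemma exists_near_geodesic (hφ : IsQIEmbedding K ε φ) (hK : 0 < K) {δ : ℝ}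
    (hyp : DeltaHyperbolic Y δ) (geo : GeodesicMS Y) {u v x : X} {σ : ℝ → X}
    (hσ : IsGeodesicSeg σ u v) (hx : x ∈ geodImage σ u v) {γ : ℝ → Y}
    (hγ : IsGeodesicSeg γ (φ u) (φ v)) :
    ∃ w ∈ geodImage γ (φ u) (φ v), dist (φ x) w ≤ qiMorseBound δ K ε := by
  have hc := hφ.isQuasiGeodesicChain_sample hK hσ
  set c : ℕ → Y := fun i => φ (σ (min (i : ℝ) (dist u v)))
  have hc0 : c 0 = φ u := by simp [c, hσ.1]
  have hcn : c ⌈dist u v⌉₊ = φ v := by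
    simp only [c]
    rw [min_eq_right (Nat.le_ceil _), hσ.2.1]
  rw [← hc0, ← hcn] at hγ ⊢
  obtain ⟨τ, hτ, rfl⟩ := hx
  have hl : ⌊τ⌋₊ ≤ ⌈dist u v⌉₊ := (Nat.floor_le_floor hτ.2).trans (Nat.floor_le_ceil _)
  have hτl : dist (σ τ) (σ (min (⌊τ⌋₊ : ℝ) (dist u v))) ≤ 1 := by
    rw [min_eq_left ((Nat.floor_le hτ.1).trans hτ.2),
      hσ.dist_eq hτ ⟨(⌊τ⌋₊).cast_nonneg, (Nat.floor_le hτ.1).trans hτ.2⟩,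
      abs_of_nonneg (sub_nonneg.mpr (Nat.floor_le hτ.1))]
    linarith [Nat.lt_floor_add_one τ]
  obtain ⟨w, hw, hdw⟩ := exists_near_geodesic_of_chain hyp geo hc hK.le hγ hl
  refine ⟨w, hw, ?_⟩
  unfold qiMorseBound
  linarith [dist_triangle (φ (σ τ)) (c ⌊τ⌋₊) w, (hφ (σ τ) (σ (min (⌊τ⌋₊ : ℝ) (dist u v)))).2,
    mul_le_mul_of_nonneg_left hτl hK.le]

end IsQIEmbedding

lemma IsQIEmbedding.dist_nearest_image_le {Y₁ Y₂ : Type} [MetricSpace Y₁] [MetricSpace Y₂]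
    {δ K ε : ℝ} {φ : Y₁ → Y₂} (hφ : IsQIEmbedding K ε φ) (hK : 0 < K)
    (geo₁ : GeodesicMS Y₁) (hyp₁ : DeltaHyperbolic Y₁ δ)
    (geo₂ : GeodesicMS Y₂) (hyp₂ : DeltaHyperbolic Y₂ δ)
    {a b p q : Y₁} {γ₁ : ℝ → Y₁} (hγ₁ : IsGeodesicSeg γ₁ a b) (hq : q ∈ geodImage γ₁ a b)
    (hqnear : ∀ x ∈ geodImage γ₁ a b, dist p q ≤ dist p x)
    {r : Y₂} {γ₂ : ℝ → Y₂} (hγ₂ : IsGeodesicSeg γ₂ (φ a) (φ b)) (hr : r ∈ geodImage γ₂ (φ a) (φ b))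
    (hrnear : ∀ x ∈ geodImage γ₂ (φ a) (φ b), dist (φ p) r ≤ dist (φ p) x) :
    dist r (φ q) ≤ 7 * (qiMorseBound δ K ε + 9 * K * δ + ε + 9 * δ) := by
  have hδ := hyp₂.nonneg geo₂ r
  have hε := hφ.nonneg p
  obtain ⟨w₀, hw₀, hdw₀⟩ := hφ.exists_near_geodesic hK hyp₂ geo₂ hγ₁ hq hγ₂
  have hM : 0 ≤ qiMorseBound δ K ε := dist_nonneg.trans hdw₀
  have hφq : ∀ {x : Y₁} {σ : ℝ → Y₂}, x ∈ geodImage γ₁ a b → IsGeodesicSeg σ (φ p) (φ x) →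
      ∃ w ∈ geodImage σ (φ p) (φ x), dist (φ q) w ≤ qiMorseBound δ K ε + 9 * K * δ + ε + 9 * δ := by
    intro x σ hx hσ
    obtain ⟨τ, hτ⟩ := geo₁ p x
    obtain ⟨w, hw, hdw⟩ := hyp₁.exists_near_of_isNearest geo₁ hγ₁ hq hqnear hx hτ
    obtain ⟨w', hw', hdw'⟩ := hφ.exists_near_geodesic hK hyp₂ geo₂ hτ hw hσ
    refine ⟨w', hw', ?_⟩
    nlinarith [dist_triangle (φ q) (φ w) w', (hφ q w).2, mul_le_mul_of_nonneg_left hdw hK.le]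
  have hr' : ∀ {x : Y₂} {σ : ℝ → Y₂}, x ∈ geodImage γ₂ (φ a) (φ b) → IsGeodesicSeg σ (φ p) x →
      ∃ w ∈ geodImage σ (φ p) x, dist r w ≤ qiMorseBound δ K ε + 9 * K * δ + ε + 9 * δ := by
    intro x σ hx hσ
    obtain ⟨w, hw, hdw⟩ := hyp₂.exists_near_of_isNearest geo₂ hγ₂ hr hrnear hx hσ
    exact ⟨w, hw, by nlinarith [mul_nonneg hK.le hδ]⟩
  obtain ⟨σa, hσa⟩ := geo₂ (φ p) (φ a)
  obtain ⟨σb, hσb⟩ := geo₂ (φ p) (φ b)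
  exact dist_le_of_near_sides hγ₂ hσa hσb
    ⟨r, hr, by rw [dist_self]; nlinarith [mul_nonneg hK.le hδ]⟩
    (hr' hγ₂.left_mem_geodImage hσa) (hr' hγ₂.right_mem_geodImage hσb)
    ⟨w₀, hw₀, by nlinarith [mul_nonneg hK.le hδ]⟩
    (hφq hγ₁.left_mem_geodImage hσa) (hφq hγ₁.right_mem_geodImage hσb)

/-- Quasi-isometries and nearest-point projections almost commute: given
δ-hyperbolic geodesic metric spaces `Y₁`, `Y₂`, a geodesic segment `μ₁` in `Y₁` joining `a`
and `b`, a point `p ∈ Y₁` with `q` a nearest point of `μ₁` to `p`, a (K,ε)-quasi-isometric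
embedding `φ : Y₁ → Y₂`, a geodesic segment `μ₂` in `Y₂` joining `φ a` and `φ b`, and `r`
a nearest point of `μ₂` to `φ p`, we have `d₂(r, φ q) ≤ C₄` for a constant `C₄` depending
only on K, ε and δ. -/
theorem qi_almost_commutes_with_projection (δ K ε : ℝ) :
    ∃ C₄ : ℝ, 0 < C₄ ∧
      ∀ (Y₁ Y₂ : Type) [MetricSpace Y₁] [MetricSpace Y₂],
        GeodesicMS Y₁ → DeltaHyperbolic Y₁ δ → GeodesicMS Y₂ → DeltaHyperbolic Y₂ δ →
        ∀ (a b p q : Y₁) (γ₁ : ℝ → Y₁), IsGeodesicSeg γ₁ a b →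
          q ∈ geodImage γ₁ a b → (∀ x ∈ geodImage γ₁ a b, dist p q ≤ dist p x) →
        ∀ φ : Y₁ → Y₂,
          (∀ u v : Y₁, (1 / K) * dist u v - ε ≤ dist (φ u) (φ v) ∧
            dist (φ u) (φ v) ≤ K * dist u v + ε) →
        ∀ (r : Y₂) (γ₂ : ℝ → Y₂), IsGeodesicSeg γ₂ (φ a) (φ b) →
          r ∈ geodImage γ₂ (φ a) (φ b) →
          (∀ x ∈ geodImage γ₂ (φ a) (φ b), dist (φ p) r ≤ dist (φ p) x) →
          dist r (φ q) ≤ C₄ := by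
  set C := 7 * (qiMorseBound δ K ε + 9 * K * δ + ε + 9 * δ)
  refine ⟨|C| + 2 * |ε| + 1, by positivity, ?_⟩
  intro Y₁ Y₂ _ _ geo₁ hyp₁ geo₂ hyp₂ a b p q γ₁ hγ₁ hq hqnear φ hφ r γ₂ hγ₂ hr hrnear
  rcases le_or_gt K 0 with hK | hK
  · have hsmall : ∀ u v, dist (φ u) (φ v) ≤ ε := fun u v =>
      (hφ u v).2.trans (by nlinarith [dist_nonneg (x := u) (y := v)])
    linarith [dist_triangle r (φ p) (φ q), dist_comm r (φ p), hrnear _ hγ₂.left_mem_geodImage,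
      hsmall p a, hsmall p q, le_abs_self ε, abs_nonneg C]
  · linarith [IsQIEmbedding.dist_nearest_image_le hφ hK geo₁ hyp₁ geo₂ hyp₂ hγ₁ hq hqnear hγ₂ hr
      hrnear, le_abs_self C, abs_nonneg ε]
end
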